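/- arXiv:1904.11895 — 7 statements merged into one kernel-verified Lean document; each statement's English description precedes it below -/
import Mathlib

section
/- Let P be an n×n row-stochastic matrix with stationary distribution π (so πP = π, entries of π nonnegative and summing to 1), let M be a subset of the states with p_M = Σ_{x∈M} π_x satisfying p_M < 1, and let s ∈ [0,1). Define the absorbing chain P′ by: row x of P′ equals row x of P if x ∉ M, and equals the x-th standard basis row (self-loop) if x ∈ M. Define the interpolated chain P(s) = (1−s)P + sP′. Then the row vector π(s) defined by π(s)_x = (1−s)π_x / (1 − s(1−p_M)) for x ∉ M and π(s)_x = π_x / (1 − s(1−p_M)) for x ∈ M is a probability distribution (its entries sum to 1) and is stationary for P(s): π(s) P(s) = π(s). -/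
open Matrix Finset

/-- The interpolated Markov chain `P(s) = (1-s)P + sP'` has stationary
distribution `π(s)` given by rescaling `π` on unmarked and marked states. -/
theorem interpolated_chain_stationary_distribution
    (n : ℕ) (P : Matrix (Fin n) (Fin n) ℝ) (π : Fin n → ℝ)
    (M : Finset (Fin n)) (pM : ℝ) (s : ℝ)
    (hPnonneg : ∀ x y, 0 ≤ P x y)
    (hPstoch : ∀ x, ∑ y, P x y = 1)
    (hπnonneg : ∀ x, 0 ≤ π x)
    (hπsum : ∑ x, π x = 1)
    (hπstat : ∀ y, ∑ x, π x * P x y = π y)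
    (hpM : pM = ∑ x ∈ M, π x)
    (hpMlt : pM < 1)
    (hs : 0 ≤ s ∧ s < 1)
    (P' : Matrix (Fin n) (Fin n) ℝ)
    (hP' : ∀ x y, P' x y = if x ∈ M then (if x = y then 1 else 0) else P x y)
    (Ps : Matrix (Fin n) (Fin n) ℝ)
    (hPs : Ps = (1 - s) • P + s • P')
    (πs : Fin n → ℝ)
    (hπs : ∀ x, πs x = if x ∈ M then π x / (1 - s * (1 - pM))
      else (1 - s) * π x / (1 - s * (1 - pM))) :
    (∑ x, πs x = 1) ∧ (∀ y, ∑ x, πs x * Ps x y = πs y) := by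
  obtain ⟨hs0, hs1⟩ := hs
  have hpM0 : 0 ≤ pM := by
    rw [hpM]; exact Finset.sum_nonneg fun x _ => hπnonneg x
  set Z : ℝ := 1 - s * (1 - pM) with hZdef
  have hZpos : 0 < Z := by nlinarith
  have hZne : Z ≠ 0 := ne_of_gt hZpos
  have hMsum : ∑ x, (if x ∈ M then π x else 0) = pM := by
    rw [hpM, Finset.sum_ite_mem, Finset.univ_inter]
  have key : ∀ x, πs x = (1 - s) * π x / Z + s * (if x ∈ M then π x else 0) / Z := by
    intro x
    rw [hπs x]
    by_cases h : x ∈ M <;> simp [h] <;> ring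
  constructor
  · calc ∑ x, πs x
        = ∑ x, ((1 - s) * π x / Z + s * (if x ∈ M then π x else 0) / Z) := by
          exact Finset.sum_congr rfl fun x _ => key x
      _ = (1 - s) * (∑ x, π x) / Z + s * (∑ x, (if x ∈ M then π x else 0)) / Z := by
          rw [Finset.sum_add_distrib, Finset.mul_sum, Finset.mul_sum,
            Finset.sum_div, Finset.sum_div]
      _ = 1 := by rw [hπsum, hMsum]; field_simp; ring
  · intro y
    have key2 : ∀ x, πs x * Ps x y
        = (1 - s) * (π x * P x y) / Z
          + s * (if x ∈ M then (if x = y then π x else 0) else 0) / Z := by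
      intro x
      rw [hπs x, hPs]
      simp only [Matrix.add_apply, Matrix.smul_apply, smul_eq_mul, hP' x y]
      by_cases hxy : x = y
      · subst hxy; by_cases hx : x ∈ M <;> simp [hx] <;> ring
      · by_cases hx : x ∈ M <;> simp [hx, hxy] <;> ring
    calc ∑ x, πs x * Ps x y
        = (1 - s) * (∑ x, π x * P x y) / Z
          + s * (∑ x, (if x ∈ M then (if x = y then π x else 0) else 0)) / Z := by
          rw [Finset.sum_congr rfl fun x _ => key2 x, Finset.sum_add_distrib,
            Finset.mul_sum, Finset.mul_sum, Finset.sum_div, Finset.sum_div]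
      _ = (1 - s) * π y / Z + s * (if y ∈ M then π y else 0) / Z := by
          rw [hπstat y]
          congr 2
          have : ∀ x, (if x ∈ M then (if x = y then π x else 0) else 0)
              = if x = y then (if y ∈ M then π y else 0) else 0 := by
            intro x
            by_cases hxy : x = y
            · subst hxy; simp
            · simp [hxy]
          rw [Finset.sum_congr rfl fun x _ => this x, Finset.sum_ite_eq' Finset.univ y]
          simp
      _ = πs y := by
          rw [hπs y]
          by_cases hy : y ∈ M <;> simp [hy] <;> field_simp <;> ring
end

section
/- Let π be a probability row vector on n states with strictly positive entries, M a nonempty proper subset of states with p_M = Σ_{x∈M} π_x satisfying 0 < p_M ≤ 1/2, and set s* = 1 − p_M/(1−p_M), so s* ∈ [0,1). Define π(s*)_x = (1−s*)π_x/(1−s*(1−p_M)) for x ∉ M and π(s*)_x = π_x/(1−s*(1−p_M)) for x ∈ M, and the unit vectors |U⟩ = (1−p_M)^{-1/2} Σ_{x∉M} √(π_x) e_x and |M⟩ = p_M^{-1/2} Σ_{x∈M} √(π_x) e_x. Then (i) 1 − s*(1−p_M) = 2 p_M and √(π(s*)) = (|U⟩ + |M⟩)/√2, and (ii) the overlap of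 √(π(s*)) with the vector √π (whose x-th entry is √(π_x)) satisfies ⟨√π, √(π(s*))⟩² = 1/2 + √(p_M(1−p_M)) ≥ 1/2. -/
open Finset

/-- At the critical interpolation parameter `s* = 1 - p_M/(1-p_M)` (with
`0 < p_M ≤ 1/2`), one has `1 - s*(1-p_M) = 2 p_M`, the square-rooted stationary
distribution equals `(|U⟩+|M⟩)/√2`, and its squared overlap with `√π` is
`1/2 + √(p_M(1-p_M)) ≥ 1/2`. -/
theorem sqrt_stationary_at_critical_interpolation
    (n : ℕ) (π : Fin n → ℝ) (M : Finset (Fin n)) (pM : ℝ) (sstar : ℝ)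
    (hπpos : ∀ x, 0 < π x)
    (hπsum : ∑ x, π x = 1)
    (hMne : M.Nonempty)
    (hMproper : M ≠ Finset.univ)
    (hpM : pM = ∑ x ∈ M, π x)
    (hpMpos : 0 < pM) (hpMle : pM ≤ 1 / 2)
    (hsstar : sstar = 1 - pM / (1 - pM))
    (πs : Fin n → ℝ)
    (hπs : ∀ x, πs x = if x ∈ M then π x / (1 - sstar * (1 - pM))
      else (1 - sstar) * π x / (1 - sstar * (1 - pM)))
    (U : Fin n → ℝ)
    (hU : ∀ x, U x = if x ∈ M then 0 else Real.sqrt (π x) / Real.sqrt (1 - pM))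
    (Mv : Fin n → ℝ)
    (hMv : ∀ x, Mv x = if x ∈ M then Real.sqrt (π x) / Real.sqrt pM else 0) :
    (0 ≤ sstar ∧ sstar < 1) ∧
    (1 - sstar * (1 - pM) = 2 * pM) ∧
    (∀ x, Real.sqrt (πs x) = (U x + Mv x) / Real.sqrt 2) ∧
    ((∑ x, Real.sqrt (π x) * Real.sqrt (πs x)) ^ 2
        = 1 / 2 + Real.sqrt (pM * (1 - pM))) ∧
    (1 / 2 : ℝ) ≤ (∑ x, Real.sqrt (π x) * Real.sqrt (πs x)) ^ 2 := by
  have h1pM : 0 < 1 - pM := by linarith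
  have hne : (1 - pM) ≠ 0 := ne_of_gt h1pM
  have hcrit : 1 - sstar * (1 - pM) = 2 * pM := by
    rw [hsstar]; field_simp; ring
  have hs0 : 0 ≤ sstar := by
    rw [hsstar]
    have : pM / (1 - pM) ≤ 1 := by rw [div_le_one h1pM]; linarith
    linarith
  have hs1 : sstar < 1 := by
    rw [hsstar]
    have : 0 < pM / (1 - pM) := div_pos hpMpos h1pM
    linarith
  have h1s : 1 - sstar = pM / (1 - pM) := by rw [hsstar]; ring
  have hπsM : ∀ x ∈ M, πs x = π x / (2 * pM) := fun x hx => by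
    rw [hπs x, if_pos hx, hcrit]
  have hπsU : ∀ x ∉ M, πs x = π x / (2 * (1 - pM)) := fun x hx => by
    rw [hπs x, if_neg hx, hcrit, h1s]
    field_simp
  have hsqrt : ∀ x, Real.sqrt (πs x) = (U x + Mv x) / Real.sqrt 2 := by
    intro x
    by_cases hx : x ∈ M
    · rw [hπsM x hx, hU x, hMv x, if_pos hx, if_pos hx,
        Real.sqrt_div (hπpos x).le, Real.sqrt_mul (by norm_num : (0:ℝ) ≤ 2)]
      ring
    · rw [hπsU x hx, hU x, hMv x, if_neg hx, if_neg hx,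
        Real.sqrt_div (hπpos x).le, Real.sqrt_mul (by norm_num : (0:ℝ) ≤ 2)]
      ring
  have hEq : (∑ x, Real.sqrt (π x) * Real.sqrt (πs x)) ^ 2
      = 1 / 2 + Real.sqrt (pM * (1 - pM)) := by
    have hB : ∑ x, Real.sqrt (π x) * Mv x = Real.sqrt pM := by
      have h1 : ∀ x, Real.sqrt (π x) * Mv x
          = if x ∈ M then π x / Real.sqrt pM else 0 := by
        intro x
        rw [hMv x]
        by_cases hx : x ∈ M
        · rw [if_pos hx, if_pos hx, ← mul_div_assoc,
            Real.mul_self_sqrt (hπpos x).le]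
        · rw [if_neg hx, if_neg hx, mul_zero]
      calc ∑ x, Real.sqrt (π x) * Mv x
          = ∑ x ∈ M, π x / Real.sqrt pM := by
            simp_rw [h1]
            rw [Finset.sum_ite_mem, Finset.univ_inter]
        _ = pM / Real.sqrt pM := by rw [← Finset.sum_div, ← hpM]
        _ = Real.sqrt pM := Real.div_sqrt
    have hsumMc : ∑ x ∈ Mᶜ, π x = 1 - pM := by
      have := Finset.sum_add_sum_compl M π
      rw [hπsum, ← hpM] at this
      linarith
    have hA : ∑ x, Real.sqrt (π x) * U x = Real.sqrt (1 - pM) := by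
      have h1 : ∀ x, Real.sqrt (π x) * U x
          = if x ∈ Mᶜ then π x / Real.sqrt (1 - pM) else 0 := by
        intro x
        rw [hU x]
        by_cases hx : x ∈ M
        · rw [if_pos hx, if_neg (by simpa using hx), mul_zero]
        · rw [if_neg hx, if_pos (by simpa using hx), ← mul_div_assoc,
            Real.mul_self_sqrt (hπpos x).le]
      calc ∑ x, Real.sqrt (π x) * U x
          = ∑ x ∈ Mᶜ, π x / Real.sqrt (1 - pM) := by
            simp_rw [h1]
            rw [Finset.sum_ite_mem, Finset.univ_inter]
        _ = (1 - pM) / Real.sqrt (1 - pM) := by rw [← Finset.sum_div, hsumMc]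
        _ = Real.sqrt (1 - pM) := Real.div_sqrt
    have hS : ∑ x, Real.sqrt (π x) * Real.sqrt (πs x)
        = (Real.sqrt (1 - pM) + Real.sqrt pM) / Real.sqrt 2 := by
      simp_rw [hsqrt, ← mul_div_assoc, ← Finset.sum_div, mul_add,
        Finset.sum_add_distrib, hA, hB]
    rw [hS, div_pow, Real.sq_sqrt (by norm_num : (0:ℝ) ≤ 2), add_sq,
      Real.sq_sqrt h1pM.le, Real.sq_sqrt hpMpos.le,
      Real.sqrt_mul hpMpos.le]
    ring
  exact ⟨⟨hs0, hs1⟩, hcrit, hsqrt, hEq, by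
    rw [hEq]; linarith [Real.sqrt_nonneg (pM * (1 - pM))]⟩
end

section
/- Let H be a Hermitian operator on ℂⁿ with orthonormal eigenbasis v₁, …, v_n and real eigenvalues λ₁, …, λ_n satisfying λ_n = 0 and Δ < λ_k ≤ 1 for all k ≠ n, where Δ ∈ (0,1]. Let l = ⌈log₂(1/Δ)⌉ + 1 and let p̂ be the operator on ℂ^{2^l} given by p̂ = Σ_{q=0}^{2^l−1} (q/2^l) |q⟩⟨q| in the standard basis. Let x₀ = 2^{−l/2} Σ_{q=0}^{2^l−1} |q⟩ (the uniform superposition) and let ψ₀ = Σ_{j=1}^n α_j v_j be a unit vector. Set τ = 2π/Δ. Then exp(−i τ (H ⊗ p̂)) (ψ₀ ⊗ x₀) = α_n v_n ⊗ x₀ + Σ_{k=1}^{n−1} α_k v_k ⊗ (γ_k x₀ + Γ_k w_k), where for each k ≠ n: γ_k = ⟨x₀, exp(−i λ_k τ p̂) x₀⟩ satisfies |γ_k| < 1/2, w_k is a unit vector in ℂ^{2^l} orthogonal to x₀, and Γ_k ∈ ℂ satisfies |Γ_k| > √3/2 and |γ_k|² + |Γ_k|² = 1. -/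
/-!
Since `H` has eigenvectors `v j`, the operator `H ⊗ p̂` maps `v j ⊗ y` to `v j ⊗ (λ_j p̂ y)`, so
the evolution acts on the `j`-th branch as `exp(-i λ_j τ p̂)` on the pointer. As `p̂` is diagonal,
this multiplies the `q`-th pointer coordinate by the phase `e^{-iθq}`, `θ = λ_j τ / 2^l`, and the
overlap `γ_j` with the uniform state is a normalized geometric sum. For `j ≠ n` the choice of `τ`
and `l` puts `θ` in `(0, π]`, where `|1 - e^{-iθ}| ≥ 2θ/π` bounds that sum by `π/θ`, giving
`|γ_j| ≤ Δ / (2 λ_j) < 1/2`. Gram–Schmidt against `x₀` then produces `Γ_j` and `w_j`.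
-/

open Finset Matrix Complex
open scoped Kronecker InnerProductSpace

namespace Matrix

theorem kronecker_mulVec_mul {R l m n p : Type*} [CommSemiring R] [Fintype m] [Fintype p]
    (A : Matrix l m R) (B : Matrix n p R) (x : m → R) (y : p → R) :
    (A ⊗ₖ B) *ᵥ (fun i : m × p => x i.1 * y i.2) = fun i => (A *ᵥ x) i.1 * (B *ᵥ y) i.2 := by
  ext i
  simp only [mulVec, dotProduct, Fintype.sum_prod_type, kroneckerMap_apply, sum_mul_sum]
  exact sum_congr rfl fun _ _ => sum_congr rfl fun _ _ => by ring

theorem exp_smul_diagonal_mulVec {n : Type*} [Fintype n] [DecidableEq n] (c : ℂ) (d y : n → ℂ) :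
    NormedSpace.exp (c • diagonal d) *ᵥ y = fun q => Complex.exp (c * d q) * y q := by
  ext q
  rw [← diagonal_smul, exp_diagonal, mulVec_diagonal, Pi.coe_exp, ← Complex.exp_eq_exp_ℂ]
  rfl

variable {𝕂 m n : Type*} [RCLike 𝕂] [Fintype m] [DecidableEq m] [Fintype n] [DecidableEq n]

theorem hasSum_exp_mulVec (A : Matrix m m 𝕂) (v : m → 𝕂) :
    HasSum (fun k : ℕ => (k.factorial⁻¹ : 𝕂) • (A ^ k *ᵥ v)) (NormedSpace.exp A *ᵥ v) := by
  open scoped Norms.Operator in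
  have := (NormedSpace.exp_series_hasSum_exp' (𝕂 := 𝕂) A).map (mulVec.addMonoidHomLeft v)
    (continuous_id.matrix_mulVec continuous_const)
  simp only [mulVec.addMonoidHomLeft, AddMonoidHom.coe_mk, ZeroHom.coe_mk, Function.comp_def,
    smul_mulVec] at this
  exact this

theorem exp_mulVec_map_of_intertwining {A : Matrix m m 𝕂} {B : Matrix n n 𝕂}
    (T : (n → 𝕂) →ₗ[𝕂] (m → 𝕂)) (hT : ∀ y, A *ᵥ T y = T (B *ᵥ y)) (y : n → 𝕂) :
    NormedSpace.exp A *ᵥ T y = T (NormedSpace.exp B *ᵥ y) := by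
  have hpow (k : ℕ) : A ^ k *ᵥ T y = T (B ^ k *ᵥ y) := by
    induction k with
    | zero => simp
    | succ k ih => rw [pow_succ', ← mulVec_mulVec, ih, hT, mulVec_mulVec, ← pow_succ']
  refine (hasSum_exp_mulVec A (T y)).unique ?_
  simpa only [Function.comp_def, hpow, map_smul] using
    (hasSum_exp_mulVec B y).map T T.continuous_of_finiteDimensional

theorem exp_smul_kronecker_mulVec_of_mulVec_eq_smul {H : Matrix m m 𝕂} {v : m → 𝕂} {μ : 𝕂}
    (hv : H *ᵥ v = μ • v) (c : 𝕂) (P : Matrix n n 𝕂) (y : n → 𝕂) :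
    NormedSpace.exp (c • (H ⊗ₖ P)) *ᵥ (fun i : m × n => v i.1 * y i.2) =
      fun i => v i.1 * (NormedSpace.exp ((c * μ) • P) *ᵥ y) i.2 := by
  let T : (n → 𝕂) →ₗ[𝕂] (m × n → 𝕂) :=
    { toFun := fun y i => v i.1 * y i.2
      map_add' := fun _ _ => funext fun _ => mul_add _ _ _
      map_smul' := fun _ _ => funext fun _ => mul_left_comm _ _ _ }
  refine exp_mulVec_map_of_intertwining T (fun y => ?_) y
  ext i
  simp only [T, LinearMap.coe_mk, AddHom.coe_mk, smul_mulVec, kronecker_mulVec_mul, hv,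
    Pi.smul_apply, smul_eq_mul]
  ring

theorem exp_smul_kronecker_mulVec_of_eq_sum {ι : Type*} [Fintype ι] {H : Matrix m m 𝕂}
    {v : ι → m → 𝕂} {μ : ι → 𝕂} (hv : ∀ j, H *ᵥ v j = μ j • v j) {α : ι → 𝕂} {ψ : m → 𝕂}
    (hψ : ∀ i, ψ i = ∑ j, α j * v j i) (c : 𝕂) (P : Matrix n n 𝕂) (y : n → 𝕂) :
    NormedSpace.exp (c • (H ⊗ₖ P)) *ᵥ (fun i : m × n => ψ i.1 * y i.2) =
      fun i => ∑ j, α j * v j i.1 * (NormedSpace.exp ((c * μ j) • P) *ᵥ y) i.2 := by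
  have hsum : (fun i : m × n => ψ i.1 * y i.2) = ∑ j, α j • fun i : m × n => v j i.1 * y i.2 := by
    ext i
    simp only [hψ, sum_mul, Finset.sum_apply, Pi.smul_apply, smul_eq_mul, mul_assoc]
  ext i
  simp only [hsum, mulVec_sum, mulVec_smul, exp_smul_kronecker_mulVec_of_mulVec_eq_smul (hv _),
    Finset.sum_apply, Pi.smul_apply, smul_eq_mul, mul_assoc]

end Matrix

theorem exists_eq_inner_smul_add_smul_of_norm_inner_lt_one {𝕜 E : Type*} [RCLike 𝕜]
    [NormedAddCommGroup E] [InnerProductSpace 𝕜 E] {x u : E} (hx : ‖x‖ = 1) (hu : ‖u‖ = 1)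
    (h : ‖⟪x, u⟫_𝕜‖ < 1) :
    ∃ (Γ : 𝕜) (w : E), ‖w‖ = 1 ∧ ⟪x, w⟫_𝕜 = 0 ∧ ‖⟪x, u⟫_𝕜‖ ^ 2 + ‖Γ‖ ^ 2 = 1 ∧
      u = ⟪x, u⟫_𝕜 • x + Γ • w := by
  set γ := ⟪x, u⟫_𝕜
  set r := u - γ • x
  have hxr : ⟪x, r⟫_𝕜 = 0 := by
    simp [r, γ, inner_sub_right, inner_smul_right, inner_self_eq_norm_sq_to_K, hx]
  have hpyth : ‖r‖ ^ 2 = 1 - ‖γ‖ ^ 2 := by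
    have := norm_add_sq_eq_norm_sq_add_norm_sq_of_inner_eq_zero (γ • x) r
      (by rw [inner_smul_left, hxr, mul_zero])
    rw [add_sub_cancel, hu, norm_smul, hx, mul_one] at this
    linarith
  have hr : ‖r‖ ≠ 0 := fun h0 => by nlinarith [norm_nonneg γ]
  refine ⟨‖r‖, (‖r‖⁻¹ : 𝕜) • r, ?_, ?_, ?_, ?_⟩
  · rw [norm_smul, norm_inv, RCLike.norm_ofReal, abs_norm, inv_mul_cancel₀ hr]
  · rw [inner_smul_right, hxr, mul_zero]
  · rw [RCLike.norm_ofReal, abs_norm, hpyth]; ring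
  · rw [smul_smul, mul_inv_cancel₀ (RCLike.ofReal_ne_zero.2 hr), one_smul, add_sub_cancel]

theorem exists_eq_sum_conj_mul_smul_add_smul {𝕜 ι : Type*} [RCLike 𝕜] [Fintype ι]
    {x u : ι → 𝕜} (hx : ∑ i, ‖x i‖ ^ 2 = 1) (hu : ∑ i, ‖u i‖ ^ 2 = 1)
    (h : ‖∑ i, (starRingEnd 𝕜) (x i) * u i‖ < 1) :
    ∃ (Γ : 𝕜) (w : ι → 𝕜), ∑ i, ‖w i‖ ^ 2 = 1 ∧ ∑ i, (starRingEnd 𝕜) (x i) * w i = 0 ∧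
      ‖∑ i, (starRingEnd 𝕜) (x i) * u i‖ ^ 2 + ‖Γ‖ ^ 2 = 1 ∧
      u = (∑ i, (starRingEnd 𝕜) (x i) * u i) • x + Γ • w := by
  have hinner (y : ι → 𝕜) : ⟪WithLp.toLp 2 x, WithLp.toLp 2 y⟫_𝕜 =
      ∑ i, (starRingEnd 𝕜) (x i) * y i := by
    simp only [EuclideanSpace.inner_toLp_toLp, dotProduct, Pi.star_apply, RCLike.star_def,
      mul_comm]
  have hnorm (y : ι → 𝕜) : ‖(WithLp.toLp 2 y : EuclideanSpace 𝕜 ι)‖ = 1 ↔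
      ∑ i, ‖y i‖ ^ 2 = 1 := by
    rw [← pow_eq_one_iff_of_nonneg (norm_nonneg _) two_ne_zero, EuclideanSpace.norm_sq_eq]
  obtain ⟨Γ, w, hw, hxw, hΓ, hdec⟩ := exists_eq_inner_smul_add_smul_of_norm_inner_lt_one
    ((hnorm x).2 hx) ((hnorm u).2 hu) (by rwa [hinner])
  rw [hinner] at hΓ hdec
  exact ⟨Γ, w.ofLp, (hnorm _).1 hw, by rwa [← hinner], hΓ, congrArg WithLp.ofLp hdec⟩

theorem sum_norm_sq_eq_one_of_norm_eq {𝕜 ι : Type*} [RCLike 𝕜] [Fintype ι] [Nonempty ι]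
    {y : ι → 𝕜} (hy : ∀ i, ‖y i‖ = 1 / √(Fintype.card ι)) : ∑ i, ‖y i‖ ^ 2 = 1 := by
  have hcard : (0 : ℝ) < Fintype.card ι := Nat.cast_pos.2 Fintype.card_pos
  simp only [hy, div_pow, one_pow, Real.sq_sqrt hcard.le, sum_const, card_univ, nsmul_eq_mul]
  exact mul_one_div_cancel hcard.ne'

theorem norm_exp_neg_I_mul_ofReal (r : ℝ) : ‖Complex.exp (-(Complex.I * r))‖ = 1 := by
  rw [← mul_neg, ← Complex.ofReal_neg, Complex.norm_exp_I_mul_ofReal]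

theorem two_mul_div_pi_le_norm_exp_neg_I_mul_sub_one {θ : ℝ} (hθ : 0 ≤ θ)
    (hθπ : θ ≤ Real.pi) : 2 * θ / Real.pi ≤ ‖Complex.exp (-(Complex.I * θ)) - 1‖ := by
  have hsin : 2 / Real.pi * (θ / 2) ≤ Real.sin (θ / 2) :=
    Real.mul_le_sin (by linarith) (by linarith)
  rw [← mul_neg, ← Complex.ofReal_neg, Complex.norm_exp_I_mul_ofReal_sub_one, neg_div,
    Real.sin_neg, mul_neg, norm_neg, Real.norm_eq_abs, abs_of_nonneg (mul_nonneg zero_le_two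
      (Real.sin_nonneg_of_nonneg_of_le_pi (by linarith) (by linarith)))]
  calc 2 * θ / Real.pi = 2 * (2 / Real.pi * (θ / 2)) := by ring
    _ ≤ 2 * Real.sin (θ / 2) := by gcongr

theorem norm_geom_sum_exp_neg_I_mul_le {θ : ℝ} (hθ : 0 < θ) (hθπ : θ ≤ Real.pi) (N : ℕ) :
    ‖∑ q ∈ range N, Complex.exp (-(Complex.I * θ)) ^ q‖ ≤ Real.pi / θ := by
  set z := Complex.exp (-(Complex.I * θ))
  have hz : ‖z‖ = 1 := norm_exp_neg_I_mul_ofReal θ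
  have hden := two_mul_div_pi_le_norm_exp_neg_I_mul_sub_one hθ.le hθπ
  have hden_pos : 0 < 2 * θ / Real.pi := by positivity
  have hz1 : z ≠ 1 := fun h => by simp [z, h] at hden; linarith
  have hnum : ‖z ^ N - 1‖ ≤ 2 := by
    simpa [norm_pow, hz, one_add_one_eq_two] using norm_sub_le (z ^ N) 1
  calc ‖∑ q ∈ range N, z ^ q‖ = ‖z ^ N - 1‖ / ‖z - 1‖ := by rw [geom_sum_eq hz1, norm_div]
    _ ≤ 2 / (2 * θ / Real.pi) := div_le_div₀ zero_le_two hnum hden_pos hden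
    _ = Real.pi / θ := by field_simp

theorem sqrt_three_div_two_lt_of_sq_add_sq_eq_one {a b : ℝ} (ha : 0 ≤ a) (ha2 : a < 1 / 2)
    (hb : 0 ≤ b) (hab : a ^ 2 + b ^ 2 = 1) : √3 / 2 < b := by
  rw [div_lt_iff₀ two_pos, mul_comm]
  exact (Real.sqrt_lt_sqrt (by norm_num) (by nlinarith)).trans_eq (Real.sqrt_sq (by positivity))

section Pointer

variable {N : ℕ} {x : Fin N → ℂ}

theorem norm_sum_conj_mul_exp_neg_I_mul_le (hx : ∀ q, ‖x q‖ = 1 / √N) {s : ℝ} (hs : 0 < s)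
    (hsN : s ≤ Real.pi * N) :
    ‖∑ q, (starRingEnd ℂ) (x q) * (Complex.exp (-(Complex.I * (s * q / N : ℝ))) * x q)‖ ≤
      Real.pi / s := by
  have hN : (0 : ℝ) < N := by
    by_contra h
    nlinarith [Real.pi_pos]
  have hterm (q : Fin N) :
      (starRingEnd ℂ) (x q) * (Complex.exp (-(Complex.I * (s * q / N : ℝ))) * x q) =
        (N : ℂ)⁻¹ * Complex.exp (-(Complex.I * (s / N : ℝ))) ^ (q : ℕ) := by
    rw [mul_left_comm, Complex.conj_mul', hx, ← Complex.exp_nat_mul, ← Complex.ofReal_pow,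
      div_pow, Real.sq_sqrt hN.le]
    push_cast
    ring_nf
  rw [sum_congr rfl fun q _ => hterm q, ← mul_sum, Fin.sum_univ_eq_sum_range
    (fun q => Complex.exp (-(Complex.I * (s / N : ℝ))) ^ q), norm_mul, norm_inv,
    Complex.norm_natCast]
  calc (N : ℝ)⁻¹ * ‖∑ q ∈ range N, Complex.exp (-(Complex.I * (s / N : ℝ))) ^ q‖
      ≤ (N : ℝ)⁻¹ * (Real.pi / (s / N)) := by
        gcongr
        exact norm_geom_sum_exp_neg_I_mul_le (by positivity) (by rwa [div_le_iff₀ hN]) N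
    _ = Real.pi / s := by field_simp

theorem norm_sum_conj_mul_exp_neg_I_mul_lt_half (hx : ∀ q, ‖x q‖ = 1 / √N) {Δ μ : ℝ}
    (hΔ : 0 < Δ) (hΔμ : Δ < μ) (hμ : μ ≤ 1) (hN : 2 ≤ Δ * N) :
    ‖∑ q, (starRingEnd ℂ) (x q) *
      (Complex.exp (-(Complex.I * (μ * (2 * Real.pi / Δ) * q / N : ℝ))) * x q)‖ < 1 / 2 := by
  have hμ₀ : 0 < μ := hΔ.trans hΔμ
  have hsN : μ * (2 * Real.pi / Δ) ≤ Real.pi * N := by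
    rw [mul_div_assoc', div_le_iff₀ hΔ]
    nlinarith [Real.pi_pos]
  calc _ ≤ Real.pi / (μ * (2 * Real.pi / Δ)) :=
        norm_sum_conj_mul_exp_neg_I_mul_le hx (by positivity) hsN
    _ = Δ / (2 * μ) := by field_simp
    _ < 1 / 2 := by rw [div_lt_div_iff₀ (by positivity) two_pos]; linarith

theorem exists_decomposition_of_eq_exp_neg_I_mul (hx : ∀ q, ‖x q‖ = 1 / √N) {Δ μ : ℝ}
    (hΔ : 0 < Δ) (hΔμ : Δ < μ) (hμ : μ ≤ 1) (hN : 2 ≤ Δ * N) {u : Fin N → ℂ}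
    (hu : ∀ q, u q = Complex.exp (-(Complex.I * (μ * (2 * Real.pi / Δ) * q / N : ℝ))) * x q) :
    ∃ (Γ : ℂ) (w : Fin N → ℂ), ‖∑ q, (starRingEnd ℂ) (x q) * u q‖ < 1 / 2 ∧
      ∑ q, ‖w q‖ ^ 2 = 1 ∧ ∑ q, (starRingEnd ℂ) (x q) * w q = 0 ∧ √3 / 2 < ‖Γ‖ ∧
      ‖∑ q, (starRingEnd ℂ) (x q) * u q‖ ^ 2 + ‖Γ‖ ^ 2 = 1 ∧
      u = (∑ q, (starRingEnd ℂ) (x q) * u q) • x + Γ • w := by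
  have hN₀ : (0 : ℝ) < N := by nlinarith
  have : Nonempty (Fin N) := ⟨⟨0, Nat.cast_pos.1 hN₀⟩⟩
  have hγ : ‖∑ q, (starRingEnd ℂ) (x q) * u q‖ < 1 / 2 := by
    simpa only [hu] using norm_sum_conj_mul_exp_neg_I_mul_lt_half hx hΔ hΔμ hμ hN
  have hx' : ∀ q, ‖x q‖ = 1 / √(Fintype.card (Fin N)) := by simpa only [Fintype.card_fin]
  obtain ⟨Γ, w, hw, hxw, hsq, hdec⟩ := exists_eq_sum_conj_mul_smul_add_smul
    (sum_norm_sq_eq_one_of_norm_eq hx')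
    (sum_norm_sq_eq_one_of_norm_eq fun q => by
      rw [hu, norm_mul, norm_exp_neg_I_mul_ofReal, one_mul, hx'])
    (hγ.trans one_half_lt_one)
  exact ⟨Γ, w, hγ, hw, hxw,
    sqrt_three_div_two_lt_of_sq_add_sq_eq_one (norm_nonneg _) hγ (norm_nonneg _) hsq, hsq, hdec⟩

end Pointer

theorem two_le_mul_two_pow_natCeil_logb_one_div_add_one {Δ : ℝ} (hΔ : 0 < Δ) :
    2 ≤ Δ * 2 ^ (⌈Real.logb 2 (1 / Δ)⌉₊ + 1) := by
  have h : 1 / Δ ≤ 2 ^ ⌈Real.logb 2 (1 / Δ)⌉₊ := by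
    rw [← Real.rpow_natCast, ← Real.logb_le_iff_le_rpow one_lt_two (by positivity)]
    exact Nat.le_ceil _
  rw [div_le_iff₀ hΔ] at h
  rw [pow_succ]
  nlinarith

theorem von_neumann_single_round_general
    (n : ℕ)
    (H : Matrix (Fin n) (Fin n) ℂ)
    (v : Fin n → Fin n → ℂ)
    (lam : Fin n → ℝ)
    (heig : ∀ j, H.mulVec (v j) = (lam j : ℂ) • v j)
    (i₀ : Fin n) (Δ : ℝ) (hΔ : 0 < Δ)
    (h0 : lam i₀ = 0)
    (hgap : ∀ k, k ≠ i₀ → Δ < lam k ∧ lam k ≤ 1)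
    (l : ℕ) (hl : l = ⌈Real.logb 2 (1 / Δ)⌉₊ + 1)
    (phat : Matrix (Fin (2 ^ l)) (Fin (2 ^ l)) ℂ)
    (hphat : phat = Matrix.diagonal fun q : Fin (2 ^ l) => ((q : ℕ) : ℂ) / 2 ^ l)
    (x₀ : Fin (2 ^ l) → ℂ)
    (hx₀ : ∀ q, x₀ q = ((1 / Real.sqrt (2 ^ l) : ℝ) : ℂ))
    (α : Fin n → ℂ) (ψ₀ : Fin n → ℂ)
    (hψ₀ : ∀ x, ψ₀ x = ∑ j, α j * v j x)
    (τ : ℝ) (hτ : τ = 2 * Real.pi / Δ) :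
    ∃ γ Γ : Fin n → ℂ, ∃ w : Fin n → Fin (2 ^ l) → ℂ,
      (∀ k, k ≠ i₀ →
        γ k = ∑ q, (starRingEnd ℂ) (x₀ q) *
            ((NormedSpace.exp ((-(Complex.I * lam k * τ)) • phat)).mulVec x₀ q) ∧
        ‖γ k‖ < 1 / 2 ∧
        (∑ q, ‖w k q‖ ^ 2 = 1) ∧
        (∑ q, (starRingEnd ℂ) (x₀ q) * w k q = 0) ∧
        Real.sqrt 3 / 2 < ‖Γ k‖ ∧
        ‖γ k‖ ^ 2 + ‖Γ k‖ ^ 2 = 1) ∧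
      (NormedSpace.exp ((-(Complex.I * τ)) • (H ⊗ₖ phat))).mulVec
          (fun p : Fin n × Fin (2 ^ l) => ψ₀ p.1 * x₀ p.2) =
        fun p : Fin n × Fin (2 ^ l) =>
          α i₀ * v i₀ p.1 * x₀ p.2 +
          ∑ k ∈ Finset.univ.erase i₀,
            α k * v k p.1 * (γ k * x₀ p.2 + Γ k * w k p.2) := by
  have hx₀ (q : Fin (2 ^ l)) : ‖x₀ q‖ = 1 / √((2 ^ l : ℕ) : ℝ) := by simp [hx₀]
  have hlen : 2 ≤ Δ * ((2 ^ l : ℕ) : ℝ) := by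
    rw [Nat.cast_pow, Nat.cast_ofNat, hl]
    exact two_le_mul_two_pow_natCeil_logb_one_div_add_one hΔ
  set u : Fin n → Fin (2 ^ l) → ℂ := fun k => NormedSpace.exp ((-(I * lam k * τ)) • phat) *ᵥ x₀
  have hu (k : Fin n) (q : Fin (2 ^ l)) :
      u k q = Complex.exp (-(I * (lam k * (2 * Real.pi / Δ) * q / (2 ^ l : ℕ) : ℝ))) * x₀ q := by
    simp only [u, hphat, hτ, exp_smul_diagonal_mulVec]
    push_cast
    ring_nf
  have hdecomp (k : Fin n) (hk : k ≠ i₀) :=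
    exists_decomposition_of_eq_exp_neg_I_mul hx₀ hΔ (hgap k hk).1 (hgap k hk).2 hlen (hu k)
  choose! Γ w hΓw using hdecomp
  refine ⟨fun k => ∑ q, (starRingEnd ℂ) (x₀ q) * u k q, Γ, w, fun k hk => ?_, ?_⟩
  · obtain ⟨hγ, hw, hxw, hΓ, hsq, -⟩ := hΓw k hk
    exact ⟨rfl, hγ, hw, hxw, hΓ, hsq⟩
  · have hc (j : Fin n) : -(I * τ) * (lam j : ℂ) = -(I * lam j * τ) := by ring
    have hu₀ : u i₀ = x₀ := by simp [u, h0]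
    rw [exp_smul_kronecker_mulVec_of_eq_sum heig hψ₀]
    ext p
    simp only [hc]
    rw [← add_sum_erase _ _ (mem_univ i₀)]
    congr 1
    · exact congrArg (α i₀ * v i₀ p.1 * ·) (congrFun hu₀ p.2)
    · exact sum_congr rfl fun k hk =>
        congrArg (α k * v k p.1 * ·) (congrFun (hΓw k (ne_of_mem_erase hk)).2.2.2.2.2 p.2)

/-- One round of the von Neumann measurement scheme.  Evolving
`ψ₀ ⊗ x₀` under `exp(-iτ H ⊗ p̂)` for `τ = 2π/Δ` leaves the zero-eigenvector
component attached to the pointer state `x₀`, while every other eigenvector `v_k`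
gets a pointer component `γ_k x₀ + Γ_k w_k` with `|γ_k| < 1/2`, `|Γ_k| > √3/2`,
`|γ_k|² + |Γ_k|² = 1` and `w_k ⊥ x₀` a unit vector. -/
theorem von_neumann_single_round
    (n : ℕ) (hn : 1 ≤ n)
    (H : Matrix (Fin n) (Fin n) ℂ) (hH : H.IsHermitian)
    (v : Fin n → Fin n → ℂ)
    (horth : ∀ i j, ∑ x, (starRingEnd ℂ) (v i x) * v j x = if i = j then 1 else 0)
    (lam : Fin n → ℝ)
    (heig : ∀ j, H.mulVec (v j) = (lam j : ℂ) • v j)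
    (i₀ : Fin n) (Δ : ℝ) (hΔ : 0 < Δ) (hΔ1 : Δ ≤ 1)
    (h0 : lam i₀ = 0)
    (hgap : ∀ k, k ≠ i₀ → Δ < lam k ∧ lam k ≤ 1)
    (l : ℕ) (hl : l = ⌈Real.logb 2 (1 / Δ)⌉₊ + 1)
    (phat : Matrix (Fin (2 ^ l)) (Fin (2 ^ l)) ℂ)
    (hphat : phat = Matrix.diagonal fun q : Fin (2 ^ l) => ((q : ℕ) : ℂ) / 2 ^ l)
    (x₀ : Fin (2 ^ l) → ℂ)
    (hx₀ : ∀ q, x₀ q = ((1 / Real.sqrt (2 ^ l) : ℝ) : ℂ))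
    (α : Fin n → ℂ) (ψ₀ : Fin n → ℂ)
    (hψ₀ : ∀ x, ψ₀ x = ∑ j, α j * v j x)
    (hunit : ∑ x, ‖ψ₀ x‖ ^ 2 = 1)
    (τ : ℝ) (hτ : τ = 2 * Real.pi / Δ) :
    ∃ γ Γ : Fin n → ℂ, ∃ w : Fin n → Fin (2 ^ l) → ℂ,
      (∀ k, k ≠ i₀ →
        γ k = ∑ q, (starRingEnd ℂ) (x₀ q) *
            ((NormedSpace.exp ((-(Complex.I * lam k * τ)) • phat)).mulVec x₀ q) ∧
        ‖γ k‖ < 1 / 2 ∧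
        (∑ q, ‖w k q‖ ^ 2 = 1) ∧
        (∑ q, (starRingEnd ℂ) (x₀ q) * w k q = 0) ∧
        Real.sqrt 3 / 2 < ‖Γ k‖ ∧
        ‖γ k‖ ^ 2 + ‖Γ k‖ ^ 2 = 1) ∧
      (NormedSpace.exp ((-(Complex.I * τ)) • (H ⊗ₖ phat))).mulVec
          (fun p : Fin n × Fin (2 ^ l) => ψ₀ p.1 * x₀ p.2) =
        fun p : Fin n × Fin (2 ^ l) =>
          α i₀ * v i₀ p.1 * x₀ p.2 +
          ∑ k ∈ Finset.univ.erase i₀,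
            α k * v k p.1 * (γ k * x₀ p.2 + Γ k * w k p.2) :=
  von_neumann_single_round_general n H v lam heig i₀ Δ hΔ h0 hgap l hl phat hphat x₀ hx₀ α ψ₀ hψ₀ τ
    hτ
end

section
/- Let H be a Hermitian operator on ℂⁿ with orthonormal eigenbasis v₁, …, v_n and real eigenvalues λ₁, …, λ_n satisfying λ_n = 0 and Δ < λ_k ≤ 1 for k ≠ n, where Δ ∈ (0,1]. Let l = ⌈log₂(1/Δ)⌉ + 1, τ = 2π/Δ, and p̂ = Σ_{q=0}^{2^l−1} (q/2^l)|q⟩⟨q| on ℂ^{2^l}, with x₀ the uniform superposition in ℂ^{2^l}. Let ψ₀ = Σ_j α_j v_j be a unit vector with α_n ≠ 0, let ε ∈ (0,1), set ε′ = ε|α_n|² and K = ⌈log₂(1/ε′)⌉. On ℂⁿ ⊗ (ℂ^{2^l})^{⊗K}, let U_j = exp(−iτ H ⊗ p̂_j) where p̂_j acts as p̂ on the j-th pointer block and as identity elsewhere, and let ψ_f = U_K ⋯ U_1 (ψ₀ ⊗ x₀^{⊗K}). Then the (unnormalized) system vector obtained by pairing the pointer registers of ψ_f with x₀^{⊗K},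 namely φ̃ = (I_{ℂⁿ} ⊗ ⟨x₀^{⊗K}|) ψ_f, equals α_n (v_n + err) for some vector err ∈ ℂⁿ orthogonal to v_n with ‖err‖ ≤ ε′/|α_n| ≤ ε. -/
/-!
Since `H ⊗ p̂_j` acts on `v_k ⊗ |q⟩` as the scalar `λ_k q_j / 2^l`, every round multiplies the
component of `v_k` by a phase, and pairing with `x₀^{⊗K}` leaves `φ = Σ_k α_k c_k^K v_k`, where
`c_k = ⟨x₀, e^{-iτλ_k p̂} x₀⟩ = 2^{-l} Σ_{q < 2^l} e^{-iθ_k q}`, `θ_k = τ λ_k / 2^l`.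
The zero mode has `c = 1`. For the others the gap and the choice of `l` put `θ_k` in
`[2π / 2^l, π]`, where Jordan's inequality bounds the geometric sum by `2^l / 2`; so `|c_k| ≤ 1/2`,
and `K` rounds suppress every other component by `2^{-K} ≤ ε'`.
-/

open Finset Matrix Complex

theorem Matrix.exp_mulVec_of_mulVec_eq_smul {ι : Type*} [Fintype ι] [DecidableEq ι]
    {M : Matrix ι ι ℂ} {u : ι → ℂ} {μ : ℂ} (h : M *ᵥ u = μ • u) :
    NormedSpace.exp M *ᵥ u = Complex.exp μ • u := by
  let : NormedRing (Matrix ι ι ℂ) := Matrix.linftyOpNormedRing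
  let : NormedAlgebra ℂ (Matrix ι ι ℂ) := Matrix.linftyOpNormedAlgebra
  have hpow (k : ℕ) : M ^ k *ᵥ u = μ ^ k • u := by
    induction k with
    | zero => simp
    | succ k ih => rw [pow_succ', ← mulVec_mulVec, ih, mulVec_smul, h, smul_smul, ← pow_succ]
  let applyTo : Matrix ι ι ℂ →ₗ[ℂ] ι → ℂ :=
    LinearMap.applyₗ u ∘ₗ (Matrix.toLin' : Matrix ι ι ℂ ≃ₗ[ℂ] _).toLinearMap
  have hM := (NormedSpace.exp_series_hasSum_exp' (𝕂 := ℂ) M).map applyTo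
    applyTo.continuous_of_finiteDimensional
  have hμ := (NormedSpace.exp_series_hasSum_exp' (𝕂 := ℂ) μ).smul_const u
  rw [← Complex.exp_eq_exp_ℂ] at hμ
  refine hM.unique (hμ.congr_fun fun k => ?_)
  change ((k.factorial : ℂ)⁻¹ • M ^ k) *ᵥ u = _
  rw [smul_mulVec, hpow, smul_smul, smul_eq_mul]

theorem Matrix.ofFn_reverse_prod_mulVec_of_mulVec_eq_smul {ι R : Type*} [Fintype ι]
    [DecidableEq ι] [CommSemiring R] :
    ∀ {K : ℕ} (M : Fin K → Matrix ι ι R) (μ : Fin K → R) (u : ι → R),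
      (∀ j, M j *ᵥ u = μ j • u) → (List.ofFn M).reverse.prod *ᵥ u = (∏ j, μ j) • u
  | 0, _, _, _, _ => by simp
  | K + 1, M, μ, u, h => by
    rw [List.ofFn_succ, List.reverse_cons, List.prod_append, List.prod_singleton,
      ← mulVec_mulVec, h 0, mulVec_smul,
      ofFn_reverse_prod_mulVec_of_mulVec_eq_smul (fun j => M j.succ) (fun j => μ j.succ) u
        (fun j => h j.succ),
      smul_smul, Fin.prod_univ_succ, mul_comm]

section Orthonormal

variable {ι χ : Type*} [Fintype ι] [Fintype χ] [DecidableEq ι] {v : ι → χ → ℂ}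

theorem sum_conj_mul_sum_of_orthonormal
    (horth : ∀ i j, ∑ x, (starRingEnd ℂ) (v i x) * v j x = if i = j then 1 else 0)
    (β : ι → ℂ) (i : ι) :
    ∑ x, (starRingEnd ℂ) (v i x) * ∑ k, β k * v k x = β i := by
  simp_rw [Finset.mul_sum]
  rw [Finset.sum_comm]
  simp_rw [mul_left_comm _ (β _), ← Finset.mul_sum, horth]
  simp

theorem sum_norm_sq_sum_of_orthonormal
    (horth : ∀ i j, ∑ x, (starRingEnd ℂ) (v i x) * v j x = if i = j then 1 else 0)
    (β : ι → ℂ) :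
    ∑ x, ‖∑ k, β k * v k x‖ ^ 2 = ∑ k, ‖β k‖ ^ 2 := by
  apply Complex.ofReal_injective
  push_cast
  simp_rw [← Complex.conj_mul']
  calc ∑ x, (starRingEnd ℂ) (∑ k, β k * v k x) * ∑ k, β k * v k x
      = ∑ j, (starRingEnd ℂ) (β j) * ∑ x, (starRingEnd ℂ) (v j x) * ∑ k, β k * v k x := by
        simp_rw [map_sum, map_mul, Finset.sum_mul, Finset.mul_sum]
        rw [Finset.sum_comm]
        simp_rw [mul_assoc]
    _ = ∑ j, (starRingEnd ℂ) (β j) * β j := by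
        simp_rw [sum_conj_mul_sum_of_orthonormal horth]

theorem exists_eq_mul_add_orthogonal_of_norm_coeff_le
    (horth : ∀ i j, ∑ x, (starRingEnd ℂ) (v i x) * v j x = if i = j then 1 else 0)
    {γ α : ι → ℂ} {i₀ : ι} {δ : ℝ} (hδ : 0 ≤ δ) (hα : α i₀ ≠ 0) (hγ₀ : γ i₀ = α i₀)
    (hγ : ∀ k ≠ i₀, ‖γ k‖ ≤ ‖α k‖ * δ) (hα1 : ∑ k, ‖α k‖ ^ 2 ≤ 1) :
    ∃ err : χ → ℂ, (∑ x, (starRingEnd ℂ) (v i₀ x) * err x = 0) ∧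
      (∀ x, ∑ k, γ k * v k x = α i₀ * (v i₀ x + err x)) ∧
      √(∑ x, ‖err x‖ ^ 2) ≤ δ / ‖α i₀‖ := by
  set β : ι → ℂ := fun k => if k = i₀ then 0 else γ k / α i₀
  have hγ_eq (k : ι) : γ k = α i₀ * β k + if k = i₀ then α i₀ else 0 := by
    by_cases hk : k = i₀
    · simp [β, hk, hγ₀]
    · simp [β, hk, mul_div_cancel₀ _ hα]
  have hβ (k : ι) : ‖β k‖ ^ 2 ≤ ‖α k‖ ^ 2 * (δ / ‖α i₀‖) ^ 2 := by
    by_cases hk : k = i₀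
    · exact (by simp [β, hk] : ‖β k‖ ^ 2 = 0).trans_le (by positivity)
    · have : ‖β k‖ ≤ ‖α k‖ * δ / ‖α i₀‖ := by
        simp only [β, if_neg hk, norm_div]
        gcongr
        exact hγ k hk
      rw [← mul_pow, ← mul_div_assoc]
      gcongr
  refine ⟨fun x => ∑ k, β k * v k x, ?_, fun x => ?_, ?_⟩
  · rw [sum_conj_mul_sum_of_orthonormal horth]
    simp [β]
  · simp_rw [hγ_eq, add_mul, Finset.sum_add_distrib, ite_mul, zero_mul,
      Finset.sum_ite_eq', Finset.mem_univ, if_true, mul_assoc, ← Finset.mul_sum]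
    ring
  · rw [sum_norm_sq_sum_of_orthonormal horth]
    calc √(∑ k, ‖β k‖ ^ 2) ≤ √((δ / ‖α i₀‖) ^ 2) := by
          gcongr
          calc ∑ k, ‖β k‖ ^ 2 ≤ ∑ k, ‖α k‖ ^ 2 * (δ / ‖α i₀‖) ^ 2 := sum_le_sum fun k _ => hβ k
            _ ≤ (δ / ‖α i₀‖) ^ 2 := by
              rw [← Finset.sum_mul]
              exact mul_le_of_le_one_left (by positivity) hα1
      _ = δ / ‖α i₀‖ := Real.sqrt_sq (by positivity)

end Orthonormal

theorem norm_le_one_of_sum_norm_sq_le_one {ι E : Type*} [Fintype ι] [SeminormedAddCommGroup E]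
    {α : ι → E} (h : ∑ k, ‖α k‖ ^ 2 ≤ 1) (i : ι) : ‖α i‖ ≤ 1 := by
  rw [← sq_le_one_iff₀ (norm_nonneg _)]
  exact (Finset.single_le_sum (f := fun k => ‖α k‖ ^ 2) (fun k _ => by positivity)
    (Finset.mem_univ i)).trans h

theorem le_pow_natCeil_logb {b y : ℝ} (hb : 1 < b) (hy : 0 < y) :
    y ≤ b ^ ⌈Real.logb b y⌉₊ :=
  calc y = b ^ Real.logb b y := (Real.rpow_logb (by linarith) hb.ne' hy).symm
    _ ≤ b ^ (⌈Real.logb b y⌉₊ : ℝ) := Real.rpow_le_rpow_of_exponent_le hb.le (Nat.le_ceil _)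
    _ = b ^ ⌈Real.logb b y⌉₊ := Real.rpow_natCast b _

theorem one_half_pow_natCeil_logb_le {x : ℝ} (hx : 0 < x) :
    (1 / 2 : ℝ) ^ ⌈Real.logb 2 (1 / x)⌉₊ ≤ x := by
  rw [div_pow, one_pow, one_div_le (by positivity) hx]
  exact le_pow_natCeil_logb one_lt_two (one_div_pos.mpr hx)

theorem two_le_mul_two_pow_natCeil_logb_add_one {x : ℝ} (hx : 0 < x) :
    2 ≤ x * 2 ^ (⌈Real.logb 2 (1 / x)⌉₊ + 1) := by
  have h := le_pow_natCeil_logb one_lt_two (one_div_pos.mpr hx)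
  rw [div_le_iff₀ hx] at h
  rw [pow_succ]
  nlinarith

theorem norm_geom_sum_exp_mul_I_le (θ : ℝ) (hθ : Real.sin (θ / 2) ≠ 0) (N : ℕ) :
    ‖∑ q ∈ range N, Complex.exp (I * θ) ^ q‖ ≤ 1 / |Real.sin (θ / 2)| := by
  have hdist : ‖Complex.exp (I * θ) - 1‖ = 2 * |Real.sin (θ / 2)| := by
    rw [norm_exp_I_mul_ofReal_sub_one, norm_mul, Real.norm_eq_abs, Real.norm_eq_abs,
      abs_two]
  have hne : Complex.exp (I * θ) ≠ 1 := by
    intro h1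
    rw [h1, sub_self, norm_zero] at hdist
    exact hθ (abs_eq_zero.mp (by linarith))
  have hnum : ‖Complex.exp (I * θ) ^ N - 1‖ ≤ 2 := by
    calc _ ≤ ‖Complex.exp (I * θ) ^ N‖ + ‖(1 : ℂ)‖ := norm_sub_le _ _
      _ = 2 := by
        rw [norm_pow, mul_comm, norm_exp_ofReal_mul_I, one_pow, norm_one]
        norm_num
  rw [geom_sum_eq hne, norm_div, hdist, div_le_div_iff₀ (by positivity) (by positivity)]
  nlinarith [abs_nonneg (Real.sin (θ / 2))]

/-- `⟨ξ, exp (z • diagonal d) ξ⟩`. -/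
noncomputable def pointerOverlap {σ : Type*} [Fintype σ] (ξ d : σ → ℂ) (z : ℂ) : ℂ :=
  ∑ q, (starRingEnd ℂ) (ξ q) * ξ q * Complex.exp (z * d q)

theorem norm_pointerOverlap_natCast_le_half {N : ℕ} {ξ : Fin N → ℂ}
    (hξ : ∀ q, (starRingEnd ℂ) (ξ q) * ξ q = (N : ℂ)⁻¹) {θ : ℝ}
    (hlo : 2 * Real.pi / N ≤ θ) (hhi : θ ≤ Real.pi) :
    ‖pointerOverlap ξ (fun q => ((q : ℕ) : ℂ)) (-(I * θ))‖ ≤ 1 / 2 := by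
  rcases N.eq_zero_or_pos with rfl | hN
  · simp [pointerOverlap]
  have hNpos : (0 : ℝ) < N := by exact_mod_cast hN
  have hsin : 2 / N ≤ Real.sin (θ / 2) :=
    calc 2 / (N : ℝ) = 2 / Real.pi * (2 * Real.pi / N / 2) := by field_simp
      _ ≤ 2 / Real.pi * (θ / 2) := by gcongr
      _ ≤ Real.sin (θ / 2) :=
        Real.mul_le_sin (by linarith [(by positivity : 0 ≤ 2 * Real.pi / N)]) (by linarith)
  have hsin_pos : 0 < Real.sin (θ / 2) := lt_of_lt_of_le (by positivity) hsin
  have hgeom := norm_geom_sum_exp_mul_I_le (-θ)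
    (by rw [neg_div, Real.sin_neg]; exact neg_ne_zero.mpr hsin_pos.ne') N
  rw [neg_div, Real.sin_neg, abs_neg, abs_of_pos hsin_pos] at hgeom
  have hgeom_eq : pointerOverlap ξ (fun q => ((q : ℕ) : ℂ)) (-(I * θ))
      = (N : ℂ)⁻¹ * ∑ q ∈ range N, Complex.exp (I * (-θ : ℝ)) ^ q := by
    simp_rw [pointerOverlap, hξ, ← Finset.mul_sum, ← Complex.exp_nat_mul]
    rw [Fin.sum_univ_eq_sum_range (fun q => Complex.exp (-(I * θ) * q))]
    push_cast
    ring_nf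
  rw [hgeom_eq, norm_mul, norm_inv, Complex.norm_natCast]
  calc (N : ℝ)⁻¹ * ‖∑ q ∈ range N, Complex.exp (I * (-θ : ℝ)) ^ q‖
      ≤ (N : ℝ)⁻¹ * (1 / Real.sin (θ / 2)) := by gcongr
    _ ≤ (N : ℝ)⁻¹ * (1 / (2 / N)) := by gcongr
    _ = 1 / 2 := by field_simp

theorem norm_pointerOverlap_le_half {N : ℕ} {ξ : Fin N → ℂ}
    (hξ : ∀ q, (starRingEnd ℂ) (ξ q) * ξ q = (N : ℂ)⁻¹) {Δ μ : ℝ} (hΔ : 0 < Δ)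
    (hN : 2 ≤ Δ * N) (hμ : Δ ≤ μ) (hμ1 : μ ≤ 1) :
    ‖pointerOverlap ξ (fun q => ((q : ℕ) : ℂ) / N) (-(I * ((2 * Real.pi / Δ : ℝ) : ℂ)) * μ)‖
      ≤ 1 / 2 := by
  have hNpos : (0 : ℝ) < N := by nlinarith
  have hrescale : pointerOverlap ξ (fun q => ((q : ℕ) : ℂ) / N)
        (-(I * ((2 * Real.pi / Δ : ℝ) : ℂ)) * μ)
      = pointerOverlap ξ (fun q => ((q : ℕ) : ℂ))
        (-(I * ((2 * Real.pi * μ / (Δ * N) : ℝ) : ℂ))) := by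
    refine Finset.sum_congr rfl fun q _ => ?_
    push_cast
    field_simp
  rw [hrescale]
  apply norm_pointerOverlap_natCast_le_half hξ
  · rw [div_le_div_iff₀ hNpos (by positivity)]
    nlinarith [mul_le_mul_of_nonneg_left hμ (by positivity : (0 : ℝ) ≤ 2 * Real.pi * N)]
  · rw [div_le_iff₀ (by positivity)]
    nlinarith [Real.pi_pos]

theorem sum_prod_conj_mul_sum_prod_eq_sum_pointerOverlap_pow {κ σ ν : Type*} [Fintype κ]
    [DecidableEq κ] [Fintype σ] [Fintype ν] (ξ d : σ → ℂ) (z α w : ν → ℂ) :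
    ∑ qs : κ → σ, (∏ j, (starRingEnd ℂ) (ξ (qs j))) *
        ∑ k, α k * w k * (∏ j, ξ (qs j)) * ∏ j, Complex.exp (z k * d (qs j))
      = ∑ k, α k * pointerOverlap ξ d (z k) ^ Fintype.card κ * w k := by
  simp_rw [Finset.mul_sum]
  rw [Finset.sum_comm]
  refine Finset.sum_congr rfl fun k _ => ?_
  rw [pointerOverlap, ← Finset.card_univ, ← Finset.prod_const, Fintype.prod_sum, Finset.mul_sum,
    Finset.sum_mul]
  refine Finset.sum_congr rfl fun qs _ => ?_
  simp only [Finset.prod_mul_distrib]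
  ring

section Pointer

variable {ι κ σ : Type*} [Fintype κ] [DecidableEq κ] [DecidableEq σ]

/-- The Hamiltonian `H ⊗ P_j` on `ℂ^ι ⊗ (ℂ^σ)^{⊗κ}`, with `P` acting on the `j`-th pointer. -/
def blockHamiltonian (H : Matrix ι ι ℂ) (P : Matrix σ σ ℂ) (j : κ) :
    Matrix (ι × (κ → σ)) (ι × (κ → σ)) ℂ :=
  Matrix.of fun a b => H a.1 b.1 * P (a.2 j) (b.2 j) *
    ∏ m ∈ univ.erase j, (if a.2 m = b.2 m then (1 : ℂ) else 0)

/-- The product vector `w ⊗ |qs⟩`. -/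
def pointerBasis (w : ι → ℂ) (qs : κ → σ) : ι × (κ → σ) → ℂ :=
  fun p => w p.1 * if p.2 = qs then 1 else 0

theorem blockHamiltonian_diagonal_apply (H : Matrix ι ι ℂ) (d : σ → ℂ) (j : κ)
    (a b : ι × (κ → σ)) :
    blockHamiltonian H (diagonal d) j a b = if a.2 = b.2 then H a.1 b.1 * d (b.2 j) else 0 := by
  by_cases hab : a.2 = b.2
  · simp [blockHamiltonian, hab]
  · obtain ⟨m, hm⟩ := Function.ne_iff.mp hab
    rw [if_neg hab]
    by_cases hmj : m = j
    · subst hmj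
      simp [blockHamiltonian, hm]
    · simp only [blockHamiltonian, of_apply]
      rw [Finset.prod_eq_zero (Finset.mem_erase.mpr ⟨hmj, Finset.mem_univ m⟩) (if_neg hm),
        mul_zero]

theorem blockHamiltonian_mulVec_pointerBasis [Fintype ι] [Fintype σ] {H : Matrix ι ι ℂ}
    {w : ι → ℂ} {μ : ℂ} (hw : H *ᵥ w = μ • w) (d : σ → ℂ) (j : κ) (qs : κ → σ) :
    blockHamiltonian H (diagonal d) j *ᵥ pointerBasis w qs
      = (μ * d (qs j)) • pointerBasis w qs := by
  ext a
  have hHw := congrFun hw a.1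
  simp only [mulVec, dotProduct, Pi.smul_apply, smul_eq_mul] at hHw ⊢
  simp only [blockHamiltonian_diagonal_apply, pointerBasis, Fintype.sum_prod_type]
  by_cases ha : a.2 = qs
  · simp only [ha, mul_ite, mul_one, mul_zero, Finset.sum_ite_eq', Finset.mem_univ, if_true]
    simp_rw [mul_right_comm _ (d (qs j)), ← Finset.sum_mul, hHw]
  · simp [ha]

theorem ofFn_exp_blockHamiltonian_prod_mulVec_pointerBasis [Fintype ι] [DecidableEq ι]
    [Fintype σ] {K : ℕ} {H : Matrix ι ι ℂ} {w : ι → ℂ} {μ : ℂ} (hw : H *ᵥ w = μ • w)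
    (d : σ → ℂ) (c : ℂ) (qs : Fin K → σ) :
    (List.ofFn fun j => NormedSpace.exp (c • blockHamiltonian H (diagonal d) j)).reverse.prod
        *ᵥ pointerBasis w qs
      = (∏ j, Complex.exp (c * μ * d (qs j))) • pointerBasis w qs :=
  ofFn_reverse_prod_mulVec_of_mulVec_eq_smul _ _ _ fun j => exp_mulVec_of_mulVec_eq_smul <| by
    rw [smul_mulVec, blockHamiltonian_mulVec_pointerBasis hw, smul_smul, mul_assoc]

theorem mulVec_tensor_of_mulVec_pointerBasis {ν : Type*} [Fintype ν] [Fintype ι] [Fintype σ]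
    {U : Matrix (ι × (κ → σ)) (ι × (κ → σ)) ℂ} {v : ν → ι → ℂ} {E : ν → (κ → σ) → ℂ}
    (hU : ∀ k qs, U *ᵥ pointerBasis (v k) qs = E k qs • pointerBasis (v k) qs)
    {ψ : ι → ℂ} {α : ν → ℂ} (hψ : ∀ x, ψ x = ∑ k, α k * v k x) (f : (κ → σ) → ℂ) :
    U *ᵥ (fun p => ψ p.1 * f p.2) = fun p => ∑ k, α k * v k p.1 * f p.2 * E k p.2 := by
  have hdecomp : (fun p : ι × (κ → σ) => ψ p.1 * f p.2)
      = ∑ k, ∑ qs, (α k * f qs) • pointerBasis (v k) qs := by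
    ext p
    simp [pointerBasis, hψ, Finset.sum_mul]
    exact Finset.sum_congr rfl fun k _ => by ring
  rw [hdecomp]
  simp only [mulVec_sum, mulVec_smul, hU]
  ext p
  simp [pointerBasis]
  exact Finset.sum_congr rfl fun k _ => by ring

theorem sum_pairing_ofFn_exp_blockHamiltonian_prod_mulVec [Fintype ι] [DecidableEq ι]
    [Fintype σ] {ν : Type*} [Fintype ν] {K : ℕ} {H : Matrix ι ι ℂ} {v : ν → ι → ℂ} {μ : ν → ℂ}
    (hv : ∀ k, H *ᵥ v k = μ k • v k) {ψ : ι → ℂ} {α : ν → ℂ} (hψ : ∀ x, ψ x = ∑ k, α k * v k x)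
    (d : σ → ℂ) (c : ℂ) (ξ : σ → ℂ) (a : ι) :
    ∑ qs : Fin K → σ, (∏ j, (starRingEnd ℂ) (ξ (qs j))) *
        ((List.ofFn fun j => NormedSpace.exp (c • blockHamiltonian H (diagonal d) j)).reverse.prod
          *ᵥ fun p => ψ p.1 * ∏ j, ξ (p.2 j)) (a, qs)
      = ∑ k, α k * pointerOverlap ξ d (c * μ k) ^ K * v k a := by
  rw [mulVec_tensor_of_mulVec_pointerBasis
    (fun k qs => ofFn_exp_blockHamiltonian_prod_mulVec_pointerBasis (hv k) d c qs) hψ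
    fun qs : Fin K → σ => ∏ j, ξ (qs j)]
  exact (sum_prod_conj_mul_sum_prod_eq_sum_pointerOverlap_pow ξ d (fun k => c * μ k) α
    fun k => v k a).trans (by rw [Fintype.card_fin])

end Pointer

theorem von_neumann_repeated_rounds_general
    (n : ℕ)
    (H : Matrix (Fin n) (Fin n) ℂ)
    (v : Fin n → Fin n → ℂ)
    (horth : ∀ i j, ∑ x, (starRingEnd ℂ) (v i x) * v j x = if i = j then 1 else 0)
    (lam : Fin n → ℝ)
    (heig : ∀ j, H.mulVec (v j) = (lam j : ℂ) • v j)
    (i₀ : Fin n) (Δ : ℝ) (hΔ : 0 < Δ)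
    (h0 : lam i₀ = 0)
    (hgap : ∀ k, k ≠ i₀ → Δ < lam k ∧ lam k ≤ 1)
    (l : ℕ) (hl : l = ⌈Real.logb 2 (1 / Δ)⌉₊ + 1)
    (τ : ℝ) (hτ : τ = 2 * Real.pi / Δ)
    (phat : Matrix (Fin (2 ^ l)) (Fin (2 ^ l)) ℂ)
    (hphat : phat = Matrix.diagonal fun q : Fin (2 ^ l) => ((q : ℕ) : ℂ) / 2 ^ l)
    (x₀ : Fin (2 ^ l) → ℂ)
    (hx₀ : ∀ q, x₀ q = ((1 / Real.sqrt (2 ^ l) : ℝ) : ℂ))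
    (α : Fin n → ℂ) (ψ₀ : Fin n → ℂ)
    (hψ₀ : ∀ x, ψ₀ x = ∑ j, α j * v j x)
    (hunit : ∑ x, ‖ψ₀ x‖ ^ 2 = 1)
    (hα : α i₀ ≠ 0)
    (ε ε' : ℝ) (hε : 0 < ε)
    (hε' : ε' = ε * ‖α i₀‖ ^ 2)
    (K : ℕ) (hK : K = ⌈Real.logb 2 (1 / ε')⌉₊)
    -- the Hamiltonians `H ⊗ p̂_j`, acting as `p̂` on the `j`-th pointer block
    (A : Fin K → Matrix (Fin n × (Fin K → Fin (2 ^ l)))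
        (Fin n × (Fin K → Fin (2 ^ l))) ℂ)
    (hA : ∀ j a b, A j a b = H a.1 b.1 * phat (a.2 j) (b.2 j) *
        ∏ m ∈ Finset.univ.erase j, (if a.2 m = b.2 m then (1 : ℂ) else 0))
    -- `ψ_f = U_K ⋯ U_1 (ψ₀ ⊗ x₀^{⊗K})`
    (ψf : Fin n × (Fin K → Fin (2 ^ l)) → ℂ)
    (hψf : ψf = ((List.ofFn fun j : Fin K =>
        NormedSpace.exp ((-(Complex.I * τ)) • A j)).reverse.prod).mulVec
        (fun p => ψ₀ p.1 * ∏ j, x₀ (p.2 j)))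
    -- pairing the pointer registers with `x₀^{⊗K}`
    (φ : Fin n → ℂ)
    (hφ : ∀ a, φ a = ∑ qs : Fin K → Fin (2 ^ l),
        (∏ j, (starRingEnd ℂ) (x₀ (qs j))) * ψf (a, qs)) :
    ∃ err : Fin n → ℂ,
      (∑ x, (starRingEnd ℂ) (v i₀ x) * err x = 0) ∧
      (∀ x, φ x = α i₀ * (v i₀ x + err x)) ∧
      Real.sqrt (∑ x, ‖err x‖ ^ 2) ≤ ε' / ‖α i₀‖ ∧
      ε' / ‖α i₀‖ ≤ ε := by
  subst hτ hphat
  have hA' : A = blockHamiltonian H (diagonal fun q : Fin (2 ^ l) => ((q : ℕ) : ℂ) / 2 ^ l) :=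
    funext fun j => Matrix.ext fun a b => hA j a b
  set c : Fin n → ℂ := fun k => pointerOverlap x₀ (fun q => ((q : ℕ) : ℂ) / 2 ^ l)
    (-(I * ((2 * Real.pi / Δ : ℝ) : ℂ)) * lam k)
  have hφc (a : Fin n) : φ a = ∑ k, α k * c k ^ K * v k a := by
    rw [hφ, hψf, hA']
    exact sum_pairing_ofFn_exp_blockHamiltonian_prod_mulVec heig hψ₀ _ _ x₀ a
  have hx₀_sq (q : Fin (2 ^ l)) : (starRingEnd ℂ) (x₀ q) * x₀ q = ((2 ^ l : ℕ) : ℂ)⁻¹ := by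
    rw [hx₀, Complex.conj_ofReal, ← Complex.ofReal_mul, ← sq, div_pow, one_pow,
      Real.sq_sqrt (by positivity)]
    push_cast
    ring
  have hc₀ : c i₀ = 1 := by
    simp [c, pointerOverlap, h0, hx₀_sq]
  have hck (k : Fin n) (hk : k ≠ i₀) : ‖c k‖ ≤ 1 / 2 := by
    have h := norm_pointerOverlap_le_half hx₀_sq hΔ
      (by push_cast; exact hl ▸ two_le_mul_two_pow_natCeil_logb_add_one hΔ)
      (hgap k hk).1.le (hgap k hk).2
    rwa [Nat.cast_pow, Nat.cast_ofNat] at h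
  have hα_sq : ∑ k, ‖α k‖ ^ 2 = 1 := by
    rw [← sum_norm_sq_sum_of_orthonormal horth, ← hunit]
    simp_rw [hψ₀]
  have hε'_pos : 0 < ε' := by rw [hε']; positivity
  obtain ⟨err, herr_orth, herr_eq, herr_norm⟩ :=
    exists_eq_mul_add_orthogonal_of_norm_coeff_le horth (γ := fun k => α k * c k ^ K)
      hε'_pos.le hα (by simp [hc₀]) (fun k hk => by
        rw [norm_mul, norm_pow]
        gcongr
        exact (pow_le_pow_left₀ (norm_nonneg _) (hck k hk) K).trans
          (hK ▸ one_half_pow_natCeil_logb_le hε'_pos)) hα_sq.le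
  refine ⟨err, herr_orth, fun x => (hφc x).trans (herr_eq x), herr_norm, ?_⟩
  rw [hε', pow_two, ← mul_assoc, mul_div_cancel_right₀ _ (norm_ne_zero_iff.mpr hα)]
  exact mul_le_of_le_one_right hε.le (norm_le_one_of_sum_norm_sq_le_one hα_sq.le i₀)

/-- Repeating the von Neumann measurement evolution `K = ⌈log₂(1/ε')⌉`
times with fresh pointer blocks and pairing the pointers with `x₀^{⊗K}` yields an
unnormalized system vector `α_n (v_n + err)` with `err ⊥ v_n` and
`‖err‖ ≤ ε'/|α_n| ≤ ε`. -/
theorem von_neumann_repeated_rounds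
    (n : ℕ) (hn : 1 ≤ n)
    (H : Matrix (Fin n) (Fin n) ℂ) (hH : H.IsHermitian)
    (v : Fin n → Fin n → ℂ)
    (horth : ∀ i j, ∑ x, (starRingEnd ℂ) (v i x) * v j x = if i = j then 1 else 0)
    (lam : Fin n → ℝ)
    (heig : ∀ j, H.mulVec (v j) = (lam j : ℂ) • v j)
    (i₀ : Fin n) (Δ : ℝ) (hΔ : 0 < Δ) (hΔ1 : Δ ≤ 1)
    (h0 : lam i₀ = 0)
    (hgap : ∀ k, k ≠ i₀ → Δ < lam k ∧ lam k ≤ 1)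
    (l : ℕ) (hl : l = ⌈Real.logb 2 (1 / Δ)⌉₊ + 1)
    (τ : ℝ) (hτ : τ = 2 * Real.pi / Δ)
    (phat : Matrix (Fin (2 ^ l)) (Fin (2 ^ l)) ℂ)
    (hphat : phat = Matrix.diagonal fun q : Fin (2 ^ l) => ((q : ℕ) : ℂ) / 2 ^ l)
    (x₀ : Fin (2 ^ l) → ℂ)
    (hx₀ : ∀ q, x₀ q = ((1 / Real.sqrt (2 ^ l) : ℝ) : ℂ))
    (α : Fin n → ℂ) (ψ₀ : Fin n → ℂ)
    (hψ₀ : ∀ x, ψ₀ x = ∑ j, α j * v j x)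
    (hunit : ∑ x, ‖ψ₀ x‖ ^ 2 = 1)
    (hα : α i₀ ≠ 0)
    (ε ε' : ℝ) (hε : 0 < ε) (hε1 : ε < 1)
    (hε' : ε' = ε * ‖α i₀‖ ^ 2)
    (K : ℕ) (hK : K = ⌈Real.logb 2 (1 / ε')⌉₊)
    -- the Hamiltonians `H ⊗ p̂_j`, acting as `p̂` on the `j`-th pointer block
    (A : Fin K → Matrix (Fin n × (Fin K → Fin (2 ^ l)))
        (Fin n × (Fin K → Fin (2 ^ l))) ℂ)
    (hA : ∀ j a b, A j a b = H a.1 b.1 * phat (a.2 j) (b.2 j) *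
        ∏ m ∈ Finset.univ.erase j, (if a.2 m = b.2 m then (1 : ℂ) else 0))
    -- `ψ_f = U_K ⋯ U_1 (ψ₀ ⊗ x₀^{⊗K})`
    (ψf : Fin n × (Fin K → Fin (2 ^ l)) → ℂ)
    (hψf : ψf = ((List.ofFn fun j : Fin K =>
        NormedSpace.exp ((-(Complex.I * τ)) • A j)).reverse.prod).mulVec
        (fun p => ψ₀ p.1 * ∏ j, x₀ (p.2 j)))
    -- pairing the pointer registers with `x₀^{⊗K}`
    (φ : Fin n → ℂ)
    (hφ : ∀ a, φ a = ∑ qs : Fin K → Fin (2 ^ l),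
        (∏ j, (starRingEnd ℂ) (x₀ (qs j))) * ψf (a, qs)) :
    ∃ err : Fin n → ℂ,
      (∑ x, (starRingEnd ℂ) (v i₀ x) * err x = 0) ∧
      (∀ x, φ x = α i₀ * (v i₀ x + err x)) ∧
      Real.sqrt (∑ x, ‖err x‖ ^ 2) ≤ ε' / ‖α i₀‖ ∧
      ε' / ‖α i₀‖ ≤ ε :=
  von_neumann_repeated_rounds_general n H v horth lam heig i₀ Δ hΔ h0 hgap l hl τ hτ phat hphat x₀
    hx₀ α ψ₀ hψ₀ hunit hα ε ε' hε hε' K hK A hA ψf hψf φ hφ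
end

section
/- Let V be a finite-dimensional complex inner product space, let W : V → V be a Hermitian unitary operator (so W = W† and W² = I), let Π be an orthogonal projection on V, and define H = i(WΠ − ΠW). Suppose v is a unit vector with Πv = v and ΠWv = λv for a real number λ with |λ| < 1. Define v⊥ = (Wv − λv)/√(1−λ²). Then v⊥ is a unit vector orthogonal to v with Πv⊥ = 0, and the vectors Ψ± = (v ± i v⊥)/√2 are unit eigenvectors of H with eigenvalues ±√(1−λ²) respectively: H Ψ± = ±√(1−λ²) Ψ±. -/
/-!
Write `μ = √(1 - λ²)` and `u = Wv - λv`. Since `Π` is symmetric and fixes `v` while `Πu = 0`,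
`u ⟂ v`; Pythagoras applied to `Wv = λv + u` and `‖Wv‖ = 1` gives `‖u‖ = μ`, so `v⊥ = u / μ` is
a unit vector. Using `W² = 1`, `ΠWu = Πv - λΠWv = μ²v`, hence on the orthonormal pair `(v, v⊥)`
the Hamiltonian acts as `Hv = iμ v⊥`, `Hv⊥ = -iμ v`: a multiple of a Pauli matrix, whose
eigenvectors are `(v ± i v⊥)/√2` with eigenvalues `±μ`.
-/

section

open Complex ContinuousLinearMap

variable {E : Type*} [NormedAddCommGroup E] [InnerProductSpace ℂ E]

theorem LinearMap.IsSymmetric.inner_eq_zero_of_apply_eq_self_of_apply_eq_zero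
    {P : E →ₗ[ℂ] E} (hP : P.IsSymmetric) {v u : E} (hv : P v = v) (hu : P u = 0) :
    inner ℂ v u = 0 := by
  rw [← hv, hP, hu, inner_zero_right]

theorem norm_sub_smul_eq_sqrt_one_sub_sq {v x : E} (hv : ‖v‖ = 1) (hx : ‖x‖ = 1) {lam : ℝ}
    (h : inner ℂ v (x - (lam : ℂ) • v) = 0) :
    ‖x - (lam : ℂ) • v‖ = √(1 - lam ^ 2) := by
  have hpyth := norm_add_sq_eq_norm_sq_add_norm_sq_of_inner_eq_zero ((lam : ℂ) • v)
    (x - (lam : ℂ) • v) (by rw [inner_smul_left, h, mul_zero])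
  rw [add_sub_cancel, hx, norm_smul, hv, mul_one, norm_real, Real.norm_eq_abs] at hpyth
  rw [← Real.sqrt_sq (norm_nonneg _)]
  congr 1
  nlinarith [sq_abs lam]

theorem norm_inv_sqrt_two_smul_add_smul {v w : E} (hv : ‖v‖ = 1) (hw : ‖w‖ = 1)
    (hvw : inner ℂ v w = 0) {c : ℂ} (hc : ‖c‖ = 1) :
    ‖((√2 : ℝ) : ℂ)⁻¹ • (v + c • w)‖ = 1 := by
  have hpyth := norm_add_sq_eq_norm_sq_add_norm_sq_of_inner_eq_zero v (c • w)
    (by rw [inner_smul_right, hvw, mul_zero])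
  rw [hv, norm_smul, hc, hw] at hpyth
  have hnorm : ‖v + c • w‖ = √2 := by
    rw [← Real.sqrt_mul_self (norm_nonneg _), hpyth]
    norm_num
  rw [norm_smul, hnorm, norm_inv, norm_real, Real.norm_eq_abs,
    abs_of_pos (by positivity), inv_mul_cancel₀ (by positivity)]

section Commutator

variable {W P : E →L[ℂ] E} {v : E} {c μ : ℂ}

theorem apply_sub_smul_eq_zero_of_apply_eq_self (hPv : P v = v) (hPWv : P (W v) = c • v) :
    P (W v - c • v) = 0 := by
  rw [map_sub, map_smul, hPWv, hPv, sub_self]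

theorem I_smul_commutator_apply_of_apply_eq_self (hPv : P v = v) (hPWv : P (W v) = c • v)
    (hμ : μ ≠ 0) :
    (I • (W * P - P * W)) v = (I * μ) • μ⁻¹ • (W v - c • v) := by
  rw [smul_apply, sub_apply, mul_apply_eq_comp, mul_apply_eq_comp, hPv, hPWv, smul_smul,
    mul_assoc, mul_inv_cancel₀ hμ, mul_one]

theorem I_smul_commutator_apply_inv_smul_sub_smul (hWW : W * W = 1) (hPv : P v = v)
    (hPWv : P (W v) = c • v) (hμ : μ ^ 2 = 1 - c ^ 2) :
    (I • (W * P - P * W)) (μ⁻¹ • (W v - c • v)) = -(I * μ) • v := by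
  have hWWv : W (W v) = v := by rw [← mul_apply_eq_comp, hWW, one_apply_eq_self]
  rw [smul_apply, map_smul, sub_apply, mul_apply_eq_comp, mul_apply_eq_comp,
    apply_sub_smul_eq_zero_of_apply_eq_self hPv hPWv, map_zero, zero_sub, map_sub, map_smul,
    hWWv, map_sub, map_smul, hPWv, hPv]
  match_scalars
  linear_combination (I * μ⁻¹) * hμ - I * inv_mul_mul_self μ

end Commutator

section Rotation

variable {H : E →L[ℂ] E} {v w : E} {μ : ℂ}

theorem apply_add_I_smul_of_apply_eq (hv : H v = (I * μ) • w) (hw : H w = -(I * μ) • v) :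
    H (v + I • w) = μ • (v + I • w) := by
  rw [map_add, map_smul, hv, hw]
  linear_combination (norm := module) (-μ) • I_mul_I • v

theorem apply_sub_I_smul_of_apply_eq (hv : H v = (I * μ) • w) (hw : H w = -(I * μ) • v) :
    H (v - I • w) = -μ • (v - I • w) := by
  rw [map_sub, map_smul, hv, hw]
  linear_combination (norm := module) μ • I_mul_I • v

end Rotation

end

theorem quantum_walk_hamiltonian_invariant_subspace_spectrum_general
    (V : Type*) [NormedAddCommGroup V] [InnerProductSpace ℂ V]
    [FiniteDimensional ℂ V]
    (W Pr : V →L[ℂ] V)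
    (hWsa : IsSelfAdjoint W) (hWunit : W * W = 1)
    (hPrsa : IsSelfAdjoint Pr)
    (H : V →L[ℂ] V) (hH : H = Complex.I • (W * Pr - Pr * W))
    (v : V) (hv : ‖v‖ = 1) (hPrv : Pr v = v)
    (lam : ℝ) (hlam : |lam| < 1) (hPrWv : Pr (W v) = (lam : ℂ) • v)
    (vperp : V)
    (hvperp : vperp = ((Real.sqrt (1 - lam ^ 2) : ℂ))⁻¹ • (W v - (lam : ℂ) • v))
    (Ψp Ψm : V)
    (hΨp : Ψp = ((Real.sqrt 2 : ℂ))⁻¹ • (v + Complex.I • vperp))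
    (hΨm : Ψm = ((Real.sqrt 2 : ℂ))⁻¹ • (v - Complex.I • vperp)) :
    ‖vperp‖ = 1 ∧ (inner ℂ v vperp : ℂ) = 0 ∧ Pr vperp = 0 ∧
    ‖Ψp‖ = 1 ∧ ‖Ψm‖ = 1 ∧
    H Ψp = ((Real.sqrt (1 - lam ^ 2) : ℝ) : ℂ) • Ψp ∧
    H Ψm = (-((Real.sqrt (1 - lam ^ 2) : ℝ) : ℂ)) • Ψm := by
  set μ := √(1 - lam ^ 2)
  have hlam2 : 0 < 1 - lam ^ 2 := by nlinarith [sq_abs lam, abs_nonneg lam]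
  have hμ : (μ : ℂ) ≠ 0 := Complex.ofReal_ne_zero.mpr (Real.sqrt_pos.mpr hlam2).ne'
  have hμsq : (μ : ℂ) ^ 2 = 1 - (lam : ℂ) ^ 2 := by
    rw [← Complex.ofReal_pow, Real.sq_sqrt hlam2.le]; push_cast; rfl
  have hWv : ‖W v‖ = 1 := by
    rw [ContinuousLinearMap.norm_map_of_mem_unitary
      (Unitary.mem_iff.mpr (by simp [hWsa.star_eq, hWunit])), hv]
  have hPu := apply_sub_smul_eq_zero_of_apply_eq_self hPrv hPrWv
  have hvu := hPrsa.isSymmetric.inner_eq_zero_of_apply_eq_self_of_apply_eq_zero hPrv hPu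
  have hvperp_norm : ‖vperp‖ = 1 := by
    rw [hvperp, norm_smul, norm_sub_smul_eq_sqrt_one_sub_sq hv hWv hvu, norm_inv,
      Complex.norm_real, Real.norm_of_nonneg (Real.sqrt_nonneg _),
      inv_mul_cancel₀ (by exact_mod_cast hμ)]
  have hv_vperp : inner ℂ v vperp = 0 := by rw [hvperp, inner_smul_right, hvu, mul_zero]
  have hHv : H v = (Complex.I * μ) • vperp := by
    rw [hH, hvperp]; exact I_smul_commutator_apply_of_apply_eq_self hPrv hPrWv hμ
  have hHvperp : H vperp = -(Complex.I * μ) • v := by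
    rw [hH, hvperp]; exact I_smul_commutator_apply_inv_smul_sub_smul hWunit hPrv hPrWv hμsq
  refine ⟨hvperp_norm, hv_vperp, by rw [hvperp, map_smul, hPu, smul_zero], ?_, ?_, ?_, ?_⟩
  · rw [hΨp]
    exact norm_inv_sqrt_two_smul_add_smul hv hvperp_norm hv_vperp (by simp)
  · rw [hΨm, sub_eq_add_neg, ← neg_smul]
    exact norm_inv_sqrt_two_smul_add_smul hv hvperp_norm hv_vperp (by simp)
  · rw [hΨp, map_smul, apply_add_I_smul_of_apply_eq hHv hHvperp, smul_comm]
  · rw [hΨm, map_smul, apply_sub_I_smul_of_apply_eq hHv hHvperp, smul_comm]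

/-- Spectral structure of `H = i(WPr - PrW)` on an invariant subspace:
if `W` is a Hermitian unitary, `Pr` an orthogonal projection, `Prv = v` and
`PrWv = λv` with `|λ| < 1`, then `v⊥ = (Wv - λv)/√(1-λ²)` is a unit vector
orthogonal to `v` with `Prv⊥ = 0`, and `Ψ± = (v ± i v⊥)/√2` are unit eigenvectors
of `H` with eigenvalues `±√(1-λ²)`. -/
theorem quantum_walk_hamiltonian_invariant_subspace_spectrum
    (V : Type*) [NormedAddCommGroup V] [InnerProductSpace ℂ V]
    [FiniteDimensional ℂ V]
    (W Pr : V →L[ℂ] V)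
    (hWsa : IsSelfAdjoint W) (hWunit : W * W = 1)
    (hPrsa : IsSelfAdjoint Pr) (hPridem : Pr * Pr = Pr)
    (H : V →L[ℂ] V) (hH : H = Complex.I • (W * Pr - Pr * W))
    (v : V) (hv : ‖v‖ = 1) (hPrv : Pr v = v)
    (lam : ℝ) (hlam : |lam| < 1) (hPrWv : Pr (W v) = (lam : ℂ) • v)
    (vperp : V)
    (hvperp : vperp = ((Real.sqrt (1 - lam ^ 2) : ℂ))⁻¹ • (W v - (lam : ℂ) • v))
    (Ψp Ψm : V)
    (hΨp : Ψp = ((Real.sqrt 2 : ℂ))⁻¹ • (v + Complex.I • vperp))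
    (hΨm : Ψm = ((Real.sqrt 2 : ℂ))⁻¹ • (v - Complex.I • vperp)) :
    ‖vperp‖ = 1 ∧ (inner ℂ v vperp : ℂ) = 0 ∧ Pr vperp = 0 ∧
    ‖Ψp‖ = 1 ∧ ‖Ψm‖ = 1 ∧
    H Ψp = ((Real.sqrt (1 - lam ^ 2) : ℝ) : ℂ) • Ψp ∧
    H Ψm = (-((Real.sqrt (1 - lam ^ 2) : ℝ) : ℂ)) • Ψm :=
  quantum_walk_hamiltonian_invariant_subspace_spectrum_general V W Pr hWsa hWunit hPrsa H hH v hv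
    hPrv lam hlam hPrWv vperp hvperp Ψp Ψm hΨp hΨm
end

section
/- Let H be a Hermitian operator on ℂⁿ with orthonormal eigenbasis v₁, …, v_n and real eigenvalues λ₁, …, λ_n, and let ψ₀, f be unit vectors in ℂⁿ. Then the time-averaged transition probability converges: lim_{T→∞} (1/T) ∫₀^T |⟨f, exp(−itH) ψ₀⟩|² dt = Σ_{(i,l) : λ_i = λ_l} ⟨v_l, f⟩ ⟨f, v_i⟩ ⟨v_i, ψ₀⟩ ⟨ψ₀, v_l⟩, where the sum runs over all ordered pairs (i,l) with λ_i = λ_l. -/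
open Finset Matrix Complex MeasureTheory Filter

open scoped Topology ComplexConjugate

/-!
In the eigenbasis the amplitude `⟨f, e^{-itH} ψ₀⟩` is the trigonometric polynomial
`∑ⱼ e^{-iλⱼt} aⱼ` with `aⱼ = ⟨f, vⱼ⟩⟨vⱼ, ψ₀⟩`, so the transition probability is
`∑_{i,l} e^{-i(λᵢ - λₗ)t} aᵢ conj aₗ`. The Cesàro mean `(1/T) ∫₀ᵀ e^{-iωt} dt` is `1` for `ω = 0`
and `O(1/(|ω| T))` otherwise, so in the limit only the pairs with `λᵢ = λₗ` survive.
-/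

namespace Matrix

variable {ι : Type*} [Fintype ι] [DecidableEq ι]

open scoped Matrix.Norms.Operator in
theorem exp_mulVec_of_mulVec_eq_smul_s10 {𝕂 : Type*} [RCLike 𝕂] {A : Matrix ι ι 𝕂} {u : ι → 𝕂}
    {μ : 𝕂} (h : A *ᵥ u = μ • u) : NormedSpace.exp A *ᵥ u = NormedSpace.exp μ • u := by
  have hpow (k : ℕ) : A ^ k *ᵥ u = μ ^ k • u := by
    induction k with
    | zero => simp
    | succ k ih => rw [pow_succ, ← mulVec_mulVec, h, mulVec_smul, ih, smul_smul, pow_succ']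
  let L : Matrix ι ι 𝕂 →ₗ[𝕂] ι → 𝕂 := (LinearMap.applyₗ u).comp toLin'.toLinearMap
  have hA := (NormedSpace.exp_series_hasSum_exp' (𝕂 := 𝕂) A).map L
    L.continuous_of_finiteDimensional
  refine hA.unique ?_
  simpa [L, Function.comp_def, smul_mulVec, hpow, smul_smul] using
    (NormedSpace.exp_series_hasSum_exp' (𝕂 := 𝕂) μ).smul_const u

theorem sum_smul_eq_self_of_orthonormal {R : Type*} [CommRing R] [StarRing R] {v : ι → ι → R}
    (horth : ∀ i j, ∑ x, conj (v i x) * v j x = if i = j then 1 else 0) (ψ : ι → R) :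
    ∑ j, (∑ x, conj (v j x) * ψ x) • v j = ψ := by
  -- `horth` says `Vᴴ * V = 1`; for square matrices this gives `V * Vᴴ = 1`, i.e. completeness.
  set V : Matrix ι ι R := of fun x j => v j x
  have hVV : Vᴴ * V = 1 := by
    ext i j
    simpa [V, mul_apply, one_apply, starRingEnd_apply] using horth i j
  have h := congrArg (· *ᵥ ψ) (mul_eq_one_comm.mp hVV)
  simp only [← mulVec_mulVec, one_mulVec] at h
  conv_rhs => rw [← h]
  ext x
  simp [V, mulVec, dotProduct, Finset.sum_apply, Finset.mul_sum, mul_comm, starRingEnd_apply]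

end Matrix

theorem tendsto_average_exp_neg_I_mul (ω : ℝ) :
    Tendsto (fun T : ℝ => (1 / T : ℂ) * ∫ t in (0 : ℝ)..T, exp (-(I * ω) * t)) atTop
      (𝓝 (if ω = 0 then 1 else 0)) := by
  split_ifs with hω
  · refine tendsto_const_nhds.congr' ?_
    filter_upwards [eventually_ne_atTop 0] with T hT
    simp [hω, hT]
  · have hc : -(I * ω) ≠ 0 := by simpa using hω
    have hinv : Tendsto (fun T : ℝ => (1 / T : ℂ)) atTop (𝓝 0) := by
      simpa [Function.comp_def] using (continuous_ofReal.tendsto 0).comp tendsto_inv_atTop_zero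
    refine hinv.zero_mul_isBoundedUnder_le ⟨2 / ‖-(I * ω)‖, eventually_map.2 ?_⟩
    refine Eventually.of_forall fun T => ?_
    have hunit (s : ℝ) : ‖exp (-(I * ω) * s)‖ = 1 := by simp [norm_exp]
    rw [Function.comp_apply, integral_exp_mul_complex hc, norm_div]
    gcongr
    calc _ ≤ ‖exp (-(I * ω) * T)‖ + ‖exp (-(I * ω) * (0 : ℝ))‖ := norm_sub_le _ _
      _ = 2 := by rw [hunit, hunit]; norm_num

theorem tendsto_average_sum_exp {κ : Type*} (s : Finset κ) (ω : κ → ℝ) (d : κ → ℂ) :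
    Tendsto (fun T : ℝ => (1 / T : ℂ) * ∫ t in (0 : ℝ)..T, ∑ k ∈ s, exp (-(I * ω k) * t) * d k)
      atTop (𝓝 (∑ k ∈ s, if ω k = 0 then d k else 0)) := by
  have hsplit (T : ℝ) : (1 / T : ℂ) * ∫ t in (0 : ℝ)..T, ∑ k ∈ s, exp (-(I * ω k) * t) * d k =
      ∑ k ∈ s, ((1 / T : ℂ) * ∫ t in (0 : ℝ)..T, exp (-(I * ω k) * t)) * d k := by
    rw [intervalIntegral.integral_finsetSum fun k _ =>
      (by fun_prop : Continuous _).intervalIntegrable _ _, mul_sum]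
    simp only [intervalIntegral.integral_mul_const, mul_assoc]
  simp_rw [hsplit]
  exact tendsto_finsetSum _ fun k _ => by
    simpa [ite_mul] using (tendsto_average_exp_neg_I_mul (ω k)).mul_const (d k)

theorem ofReal_norm_sum_exp_mul_sq {κ : Type*} [Fintype κ] (ω : κ → ℝ) (a : κ → ℂ) (t : ℝ) :
    ((‖∑ j, exp (-(I * ω j) * t) * a j‖ ^ 2 : ℝ) : ℂ) =
      ∑ p : κ × κ, exp (-(I * ↑(ω p.1 - ω p.2)) * t) * (a p.1 * conj (a p.2)) := by
  rw [ofReal_pow, ← mul_conj', map_sum, sum_mul_sum, ← Fintype.sum_prod_type']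
  refine sum_congr rfl fun p _ => ?_
  rw [map_mul, ← exp_conj, mul_mul_mul_comm, ← exp_add]
  congr 2
  simp only [map_mul, map_neg, conj_I, conj_ofReal]
  push_cast
  ring

section QuantumWalk

variable {ι : Type*} [Fintype ι] [DecidableEq ι] {H : Matrix ι ι ℂ} {v : ι → ι → ℂ}
  {lam : ι → ℝ}

theorem exp_neg_I_mul_smul_mulVec_eq_sum
    (horth : ∀ i j, ∑ x, conj (v i x) * v j x = if i = j then 1 else 0)
    (heig : ∀ j, H *ᵥ v j = (lam j : ℂ) • v j) (ψ : ι → ℂ) (t : ℝ) :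
    NormedSpace.exp ((-(I * t)) • H) *ᵥ ψ =
      ∑ j, (exp (-(I * lam j) * t) * ∑ x, conj (v j x) * ψ x) • v j := by
  conv_lhs => rw [← Matrix.sum_smul_eq_self_of_orthonormal horth ψ]
  rw [mulVec_sum]
  refine sum_congr rfl fun j _ => ?_
  have hv : ((-(I * t)) • H) *ᵥ v j = (-(I * lam j) * t) • v j := by
    rw [smul_mulVec, heig, smul_smul]
    ring_nf
  rw [mulVec_smul, Matrix.exp_mulVec_of_mulVec_eq_smul_s10 hv, ← Complex.exp_eq_exp_ℂ, smul_smul,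
    mul_comm]

theorem inner_exp_neg_I_mul_smul_mulVec_eq_sum
    (horth : ∀ i j, ∑ x, conj (v i x) * v j x = if i = j then 1 else 0)
    (heig : ∀ j, H *ᵥ v j = (lam j : ℂ) • v j) (f ψ : ι → ℂ) (t : ℝ) :
    ∑ x, conj (f x) * (NormedSpace.exp ((-(I * t)) • H) *ᵥ ψ) x =
      ∑ j, exp (-(I * lam j) * t) * ((∑ x, conj (f x) * v j x) * ∑ x, conj (v j x) * ψ x) := by
  simp only [exp_neg_I_mul_smul_mulVec_eq_sum horth heig ψ t, Finset.sum_apply, Pi.smul_apply,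
    smul_eq_mul, mul_sum]
  rw [sum_comm]
  refine sum_congr rfl fun j _ => ?_
  simp_rw [mul_left_comm (conj (f _)), ← mul_sum]
  ring

end QuantumWalk

theorem time_averaged_probability_tendsto_limiting_distribution_general
    (n : ℕ)
    (H : Matrix (Fin n) (Fin n) ℂ)
    (v : Fin n → Fin n → ℂ)
    (horth : ∀ i j, ∑ x, (starRingEnd ℂ) (v i x) * v j x = if i = j then 1 else 0)
    (lam : Fin n → ℝ)
    (heig : ∀ j, H.mulVec (v j) = (lam j : ℂ) • v j)
    (ψ₀ f : Fin n → ℂ) :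
    Tendsto
      (fun T : ℝ => (((1 / T) * ∫ t in (0:ℝ)..T,
          ‖∑ x, (starRingEnd ℂ) (f x) *
            ((NormedSpace.exp ((-(Complex.I * t)) • H)).mulVec ψ₀ x)‖ ^ 2 : ℝ) : ℂ))
      atTop
      (nhds (∑ i, ∑ l, if lam i = lam l then
          (∑ x, (starRingEnd ℂ) (v l x) * f x) *
          (∑ x, (starRingEnd ℂ) (f x) * v i x) *
          (∑ x, (starRingEnd ℂ) (v i x) * ψ₀ x) *
          (∑ x, (starRingEnd ℂ) (ψ₀ x) * v l x)
        else 0)) := by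
  set a : Fin n → ℂ := fun j => (∑ x, conj (f x) * v j x) * ∑ x, conj (v j x) * ψ₀ x
  have hprob (t : ℝ) :
      ((‖∑ x, conj (f x) * (NormedSpace.exp ((-(I * t)) • H) *ᵥ ψ₀) x‖ ^ 2 : ℝ) : ℂ) =
        ∑ p : Fin n × Fin n, exp (-(I * ↑(lam p.1 - lam p.2)) * t) * (a p.1 * conj (a p.2)) := by
    rw [inner_exp_neg_I_mul_smul_mulVec_eq_sum horth heig, ofReal_norm_sum_exp_mul_sq]
  convert tendsto_average_sum_exp univ (fun p : Fin n × Fin n => lam p.1 - lam p.2)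
    (fun p => a p.1 * conj (a p.2)) using 2 with T
  · simp only [ofReal_mul, ofReal_div, ofReal_one, ← intervalIntegral.integral_ofReal, hprob,
      ofReal_sub]
  · rw [← univ_product_univ, sum_product]
    refine sum_congr rfl fun i _ => sum_congr rfl fun l _ => ?_
    simp only [a, sub_eq_zero, map_mul, map_sum, conj_conj, mul_comm (f _), mul_comm (v l _)]
    split_ifs <;> ring

/-- The time-averaged transition probability of a quantum walk
converges, as `T → ∞`, to the limiting distribution
`Σ_{(i,l): λ_i = λ_l} ⟨v_l,f⟩⟨f,v_i⟩⟨v_i,ψ₀⟩⟨ψ₀,v_l⟩`. -/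
theorem time_averaged_probability_tendsto_limiting_distribution
    (n : ℕ)
    (H : Matrix (Fin n) (Fin n) ℂ) (hH : H.IsHermitian)
    (v : Fin n → Fin n → ℂ)
    (horth : ∀ i j, ∑ x, (starRingEnd ℂ) (v i x) * v j x = if i = j then 1 else 0)
    (lam : Fin n → ℝ)
    (heig : ∀ j, H.mulVec (v j) = (lam j : ℂ) • v j)
    (ψ₀ f : Fin n → ℂ)
    (hψ₀ : ∑ x, ‖ψ₀ x‖ ^ 2 = 1)
    (hf : ∑ x, ‖f x‖ ^ 2 = 1) :
    Tendsto
      (fun T : ℝ => (((1 / T) * ∫ t in (0:ℝ)..T,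
          ‖∑ x, (starRingEnd ℂ) (f x) *
            ((NormedSpace.exp ((-(Complex.I * t)) • H)).mulVec ψ₀ x)‖ ^ 2 : ℝ) : ℂ))
      atTop
      (nhds (∑ i, ∑ l, if lam i = lam l then
          (∑ x, (starRingEnd ℂ) (v l x) * f x) *
          (∑ x, (starRingEnd ℂ) (f x) * v i x) *
          (∑ x, (starRingEnd ℂ) (v i x) * ψ₀ x) *
          (∑ x, (starRingEnd ℂ) (ψ₀ x) * v l x)
        else 0)) :=
  time_averaged_probability_tendsto_limiting_distribution_general n H v horth lam heig ψ₀ f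
end

section
/- Let 0 ≤ μ < ν < 1 be real numbers and set δ = ν − μ. Then the gap between the transformed values satisfies ((μ + ν)/2) · δ ≤ √(1 − μ²) − √(1 − ν²) ≤ 2δ / √(1 − ν²). Consequently, if P is a Markov chain whose minimum eigenvalue gap Δ_min is attained between consecutive eigenvalues λ_j = μ and λ_{j+1} = ν of its discriminant matrix, with ν ≥ λ₂ (the second smallest eigenvalue) and √(1 − ν²) ≥ √Δ (where Δ is the spectral gap), then the corresponding gap Δ̃ = √(1−μ²) − √(1−ν²) of the quantum walk Hamiltonian satisfies (λ₂/2) · Δ_min ≤ Δ̃ ≤ 2 Δ_min / √Δ. -/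
/-- For `0 ≤ μ < ν < 1` with `δ = ν - μ`, the gap of the transformed
eigenvalues satisfies `((μ+ν)/2)δ ≤ √(1-μ²) - √(1-ν²) ≤ 2δ/√(1-ν²)`.
Consequently, if the minimum eigenvalue gap `Δ_min` of a Markov chain is attained
between consecutive eigenvalues `μ, ν` of its discriminant matrix, with `λ₂ ≤ ν`
and `√Δ ≤ √(1-ν²)` (`Δ > 0` the spectral gap), then the corresponding gap
`Δ̃ = √(1-μ²) - √(1-ν²)` of the quantum walk Hamiltonian satisfies
`(λ₂/2)Δ_min ≤ Δ̃ ≤ 2Δ_min/√Δ`. -/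
theorem transformed_gap_bounds
    (μ ν δ : ℝ) (hμ : 0 ≤ μ) (hμν : μ < ν) (hν : ν < 1)
    (hδ : δ = ν - μ)
    (lam₂ Δ Δmin Δtilde : ℝ)
    (hΔ : 0 < Δ)
    (hlam₂ : lam₂ ≤ ν)
    (hsq : Real.sqrt Δ ≤ Real.sqrt (1 - ν ^ 2))
    (hΔmin : Δmin = δ)
    (hΔtilde : Δtilde = Real.sqrt (1 - μ ^ 2) - Real.sqrt (1 - ν ^ 2)) :
    (((μ + ν) / 2) * δ ≤ Real.sqrt (1 - μ ^ 2) - Real.sqrt (1 - ν ^ 2)) ∧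
    (Real.sqrt (1 - μ ^ 2) - Real.sqrt (1 - ν ^ 2) ≤ 2 * δ / Real.sqrt (1 - ν ^ 2)) ∧
    ((lam₂ / 2) * Δmin ≤ Δtilde) ∧
    (Δtilde ≤ 2 * Δmin / Real.sqrt Δ) := by
  have hν0 : 0 ≤ ν := le_of_lt (lt_of_le_of_lt hμ hμν)
  have h1μ : (0:ℝ) ≤ 1 - μ ^ 2 := by nlinarith
  have h1ν : (0:ℝ) < 1 - ν ^ 2 := by nlinarith
  set A := Real.sqrt (1 - μ ^ 2) with hAdef
  set B := Real.sqrt (1 - ν ^ 2) with hBdef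
  have hA2 : A ^ 2 = 1 - μ ^ 2 := Real.sq_sqrt h1μ
  have hB2 : B ^ 2 = 1 - ν ^ 2 := Real.sq_sqrt (le_of_lt h1ν)
  have hBpos : 0 < B := Real.sqrt_pos.2 h1ν
  have hA1 : A ≤ 1 := Real.sqrt_le_one.2 (by nlinarith)
  have hB1 : B ≤ 1 := Real.sqrt_le_one.2 (by nlinarith)
  have hBA : B ≤ A := Real.sqrt_le_sqrt (by nlinarith)
  have hδ0 : 0 ≤ δ := by simp [hδ]; linarith
  have key : (A - B) * (A + B) = (ν - μ) * (ν + μ) := by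
    have h : A ^ 2 - B ^ 2 = ν ^ 2 - μ ^ 2 := by rw [hA2, hB2]; ring
    linear_combination h
  have hlow : ((μ + ν) / 2) * δ ≤ A - B := by
    have h2 : (A - B) * (2 - (A + B)) ≥ 0 :=
      mul_nonneg (by linarith) (by linarith)
    nlinarith [key]
  have hup : A - B ≤ 2 * δ / B := by
    rw [le_div_iff₀ hBpos]
    have h3 : (A - B) * B ≤ (A - B) * (A + B) := by
      apply mul_le_mul_of_nonneg_left _ (by linarith)
      have hA0 : 0 ≤ A := Real.sqrt_nonneg _
      linarith
    nlinarith [key]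
  refine ⟨hlow, hup, ?_, ?_⟩
  · have : (lam₂ / 2) * Δmin ≤ ((μ + ν) / 2) * δ := by
      rw [hΔmin]
      apply mul_le_mul_of_nonneg_right _ hδ0
      linarith
    rw [hΔtilde]
    linarith
  · have hsΔ : 0 < Real.sqrt Δ := Real.sqrt_pos.2 hΔ
    have : 2 * δ / B ≤ 2 * δ / Real.sqrt Δ := by
      gcongr
    rw [hΔtilde, hΔmin]
    linarith
end
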